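/- arXiv:0905.2778 — 10 statements merged into one kernel-verified Lean document; each statement's English description precedes it below -/
import Mathlib

section
/- Let X be a compact metric space and φ : X → X a CSLI map. Then for every natural number N, the set {u ∈ X : |φ⁻¹({u})| ≤ N} is open in X, where |·| denotes cardinality. -/
/-- A map is locally injective if every point has a neighborhood on which
the map is injective. -/
def LocallyInjective {X : Type*} [TopologicalSpace X] (φ : X → X) : Prop :=
  ∀ x : X, ∃ U ∈ nhds x, Set.InjOn φ U

/-- A map of a topological space to itself is CSLI if it is continuous,
surjective and locally injective. -/
def CSLI {X : Type*} [TopologicalSpace X] (φ : X → X) : Prop :=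
  Continuous φ ∧ Function.Surjective φ ∧ LocallyInjective φ

/-!
A fiber `φ⁻¹{v}` meets each injectivity neighbourhood of `φ` in at most one point. Covering the
compact fiber `φ⁻¹{u}` by finitely many such neighbourhoods shows it is finite, and the
neighbourhoods `U x` of its points `x` form an open set `W` around it. Since `φ` is a closed map,
the `v` with `φ⁻¹{v} ⊆ W` form an open neighbourhood of `u`; such a fiber meets each of the
`#φ⁻¹{u}` sets `U x` at most once, so it has at most `#φ⁻¹{u}` points.
-/

open Set

namespace Set

variable {α ι : Type*} {s : Set α} {F : Set ι} {t : ι → Set α}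

theorem encard_le_of_subset_biUnion_subsingleton (hF : F.Finite) (hs : s ⊆ ⋃ i ∈ F, t i)
    (ht : ∀ i ∈ F, (s ∩ t i).Subsingleton) : s.encard ≤ F.encard := by
  lift F to Finset ι using hF
  simp only [Finset.mem_coe] at hs ht
  calc s.encard = (⋃ i ∈ F, s ∩ t i).encard := by rw [← inter_iUnion₂, inter_eq_left.2 hs]
    _ ≤ ∑ i ∈ F, (s ∩ t i).encard := F.set_encard_biUnion_le _
    _ ≤ ∑ i ∈ F, 1 := Finset.sum_le_sum fun i hi ↦ encard_le_one_iff_subsingleton.2 (ht i hi)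
    _ = F.card := by simp
    _ = (F : Set ι).encard := (encard_coe_eq_coe_finsetCard F).symm

theorem finite_of_subset_biUnion_subsingleton (hF : F.Finite) (hs : s ⊆ ⋃ i ∈ F, t i)
    (ht : ∀ i ∈ F, (s ∩ t i).Subsingleton) : s.Finite :=
  hF.finite_of_encard_le (encard_le_of_subset_biUnion_subsingleton hF hs ht)

theorem ncard_le_of_subset_biUnion_subsingleton (hF : F.Finite) (hs : s ⊆ ⋃ i ∈ F, t i)
    (ht : ∀ i ∈ F, (s ∩ t i).Subsingleton) : s.ncard ≤ F.ncard :=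
  ENat.toNat_le_toNat (encard_le_of_subset_biUnion_subsingleton hF hs ht) hF.encard_lt_top.ne

theorem InjOn.subsingleton_preimage_singleton_inter {β : Type*} {f : α → β} (hf : InjOn f s)
    (b : β) : (f ⁻¹' {b} ∩ s).Subsingleton :=
  fun _ hx _ hy ↦ hf hx.2 hy.2 (hx.1.trans hy.1.symm)

end Set

namespace LocallyInjective

variable {X : Type*} [TopologicalSpace X] {φ : X → X}

theorem exists_isOpen_injOn (hφ : LocallyInjective φ) (x : X) :
    ∃ U : Set X, IsOpen U ∧ x ∈ U ∧ InjOn φ U := by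
  obtain ⟨V, hV, hφV⟩ := hφ x
  obtain ⟨U, hUV, hU, hxU⟩ := mem_nhds_iff.1 hV
  exact ⟨U, hU, hxU, hφV.mono hUV⟩

theorem finite_preimage_singleton [CompactSpace X] [T1Space X] (hφ : LocallyInjective φ)
    (hc : Continuous φ) (v : X) : (φ ⁻¹' {v}).Finite := by
  choose U hUo hUm hUi using hφ.exists_isOpen_injOn
  obtain ⟨T, -, hT, hcover⟩ := (isClosed_singleton.preimage hc).isCompact.elim_finite_subcover_image
    (fun x _ ↦ hUo x) fun y hy ↦ mem_biUnion hy (hUm y)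
  exact finite_of_subset_biUnion_subsingleton hT hcover fun x _ ↦
    (hUi x).subsingleton_preimage_singleton_inter v

end LocallyInjective

/-- For a CSLI map `φ` of a compact metric space, the set of points whose fiber
has at most `N` elements is open. -/
theorem isOpen_card_fiber_le {X : Type*} [MetricSpace X] [CompactSpace X]
    (φ : X → X) (hφ : CSLI φ) (N : ℕ) :
    IsOpen {u : X | (φ ⁻¹' {u}).ncard ≤ N} := by
  obtain ⟨hc, -, hli⟩ := hφ
  choose U hUo hUm hUi using hli.exists_isOpen_injOn
  refine isOpen_iff_forall_mem_open.2 fun u hu ↦ ?_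
  set W := ⋃ x ∈ φ ⁻¹' {u}, U x
  have hW : IsOpen (kernImage φ W) :=
    isClosedMap_iff_kernImage.1 hc.isClosedMap (isOpen_biUnion fun x _ ↦ hUo x)
  refine ⟨kernImage φ W, fun v hv ↦ ?_, hW, fun x hx ↦ mem_biUnion hx (hUm x)⟩
  calc (φ ⁻¹' {v}).ncard ≤ (φ ⁻¹' {u}).ncard :=
        ncard_le_of_subset_biUnion_subsingleton (hli.finite_preimage_singleton hc u)
          (fun y hy ↦ hv hy) fun x _ ↦ (hUi x).subsingleton_preimage_singleton_inter v
    _ ≤ N := hu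
end

section
/- Let X be a compact metric space, φ : X → X a CSLI map, and for each j ∈ ℕ set X_j = {y ∈ X : |φ⁻¹({y})| = j}. Then φ is a local homeomorphism if and only if each X_j is both closed and open in X. -/
open Set Filter Topology

lemma isLocallyConstant_iff_forall_isClopen_setOf_eq {X Y : Type*} [TopologicalSpace X]
    {g : X → Y} : IsLocallyConstant g ↔ ∀ j, IsClopen {x | g x = j} :=
  ⟨fun h j => h.isClopen_fiber j, fun h => IsLocallyConstant.iff_isOpen_fiber.2 fun j => (h j).2⟩

section

variable {X Y : Type*} [TopologicalSpace X] [TopologicalSpace Y] {f : X → Y}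

lemma IsEvenlyCovered.eventually_ncard_preimage_singleton {I : Type*} [TopologicalSpace I] {y : Y}
    (h : IsEvenlyCovered f y I) : ∀ᶠ y' in 𝓝 y, (f ⁻¹' {y'}).ncard = Nat.card I := by
  obtain ⟨hI, U, hyU, hU, hfU, H, hH⟩ := h
  filter_upwards [hU.mem_nhds hyU] with y' hy'
  have hy'_covered : IsEvenlyCovered f y' I := ⟨hI, U, hy', hU, hfU, H, hH⟩
  rw [← Nat.card_coe_set_eq, Nat.card_congr hy'_covered.fiberHomeomorph.toEquiv.symm]

lemma IsCoveringMap.isLocallyConstant_ncard_preimage_singleton (hf : IsCoveringMap f) :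
    IsLocallyConstant fun y => (f ⁻¹' {y}).ncard :=
  (IsLocallyConstant.iff_eventually_eq _).2 fun y =>
    (hf y).eventually_ncard_preimage_singleton.mono fun _ h => h.trans (Nat.card_coe_set_eq _)

namespace IsLocallyInjective

lemma finite_preimage_singleton [CompactSpace X] [T1Space Y] (hf : IsLocallyInjective f)
    (hc : Continuous f) (y : Y) : (f ⁻¹' {y}).Finite := by
  have hdisc : DiscreteTopology (f ⁻¹' {y}) := (discreteTopology_iff_locallyInjective y).2 <| by
    convert hf.comp_right continuous_subtype_val Subtype.val_injective using 1
    ext ⟨x, hx⟩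
    exact hx.symm
  exact (isClosed_singleton.preimage hc).isCompact.finite ⟨hdisc⟩

lemma eventually_exists_mem_preimage (hf : IsLocallyInjective f) (hcl : IsClosedMap f)
    (hfin : ∀ y, (f ⁻¹' {y}).Finite) (hlc : IsLocallyConstant fun y => (f ⁻¹' {y}).ncard)
    {x : X} {O : Set X} (hO : O ∈ 𝓝 x) : ∀ᶠ y in 𝓝 (f x), ∃ z ∈ O, f z = y := by
  choose W hWo hW hWinj using hf
  have hnear : ∀ᶠ y in 𝓝 (f x), ∀ z ∈ f ⁻¹' {y},
      ∃ a ∈ f ⁻¹' {f x}, z ∈ W a ∧ (a = x → z ∈ O) := by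
    refine hcl.eventually_nhds_fiber _ fun a ha => ?_
    have haO : ∀ᶠ z in 𝓝 a, a = x → z ∈ O := by
      rcases eq_or_ne a x with rfl | hne
      · exact Eventually.mono hO fun _ hz _ => hz
      · exact Eventually.of_forall fun _ h => absurd h hne
    have haW : ∀ᶠ z in 𝓝 a, z ∈ W a := (hWo a).mem_nhds (hW a)
    exact (haW.and haO).mono fun z hz => ⟨a, ha, hz⟩
  filter_upwards [hnear, hlc.eventually_eq (f x)] with y hy hcard
  choose g hgF hgW hgO using hy
  have hg_inj : ∀ z₁ z₂ h₁ h₂, g z₁ h₁ = g z₂ h₂ → z₁ = z₂ := fun z₁ z₂ h₁ h₂ hg =>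
    hWinj _ (hgW z₁ h₁) (hg ▸ hgW z₂ h₂) (h₁.trans h₂.symm)
  obtain ⟨z, hz, hzx⟩ := surj_on_of_inj_on_of_ncard_le g hgF hg_inj hcard.ge (hfin _) x rfl
  exact ⟨z, hgO z hz hzx.symm, hz⟩

lemma isOpenMap_of_isLocallyConstant_ncard (hf : IsLocallyInjective f) (hcl : IsClosedMap f)
    (hfin : ∀ y, (f ⁻¹' {y}).Finite) (hlc : IsLocallyConstant fun y => (f ⁻¹' {y}).ncard) :
    IsOpenMap f :=
  IsOpenMap.of_nhds_le fun _ s hs => by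
    filter_upwards [hf.eventually_exists_mem_preimage hcl hfin hlc hs] with _ ⟨_, hz, hzy⟩
    exact hzy ▸ hz

lemma isLocalHomeomorph (hf : IsLocallyInjective f) (hc : Continuous f) (ho : IsOpenMap f) :
    IsLocalHomeomorph f := by
  refine isLocalHomeomorph_iff_isOpenEmbedding_restrict.2 fun x => ?_
  obtain ⟨U, hU, hxU, hinj⟩ := hf x
  exact ⟨U, hU.mem_nhds hxU, .of_continuous_injective_isOpenMap (hc.comp continuous_subtype_val)
    (injOn_iff_injective.1 hinj) (ho.domRestrict hU)⟩

end IsLocallyInjective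

end

/-- A CSLI map `φ` of a compact metric space is a local homeomorphism if and only
if for each `j` the set `X_j` of points whose fiber has exactly `j` elements is
both closed and open. -/
theorem isLocalHomeomorph_iff_isClopen_card_fiber {X : Type*} [MetricSpace X]
    [CompactSpace X] (φ : X → X) (hφ : CSLI φ) :
    IsLocalHomeomorph φ ↔ ∀ j : ℕ, IsClopen {y : X | (φ ⁻¹' {y}).ncard = j} := by
  obtain ⟨hc, -, hli⟩ := hφ
  have hinj : IsLocallyInjective φ := isLocallyInjective_iff_nhds.2 hli
  rw [← isLocallyConstant_iff_forall_isClopen_setOf_eq]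
  constructor
  · intro h
    exact (isLocalHomeomorph_iff_isCoveringMap.1 h).isLocallyConstant_ncard_preimage_singleton
  · intro h
    exact hinj.isLocalHomeomorph hc <| hinj.isOpenMap_of_isLocallyConstant_ncard hc.isClosedMap
      (hinj.finite_preimage_singleton hc) h
end

section
/- Let X be a compact metric space and φ : X → X a CSLI map. If there exists a cocycle ω for φ, then for every y ∈ X there exists a point x ∈ φ⁻¹({y}) such that φ is locally open at x. -/
/-- A cocycle for a map `φ : X → X` is a continuous nonnegative real function `ω`
such that the sum of `ω` over each fiber of `φ` equals `1`. -/
def IsCocycle {X : Type*} [TopologicalSpace X] (φ : X → X) (ω : X → ℝ) : Prop :=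
  Continuous ω ∧ (∀ x : X, 0 ≤ ω x) ∧ ∀ y : X, ∑ᶠ x ∈ φ ⁻¹' {y}, ω x = 1

/-- `φ` is locally open at `x` if there is an open neighborhood `N` of `x` such that
the restriction of `φ` to `N` is an open map of `N` into `X`. -/
def LocallyOpenAt {X : Type*} [TopologicalSpace X] (φ : X → X) (x : X) : Prop :=
  ∃ N : Set X, IsOpen N ∧ x ∈ N ∧ ∀ O ⊆ N, IsOpen O → IsOpen (φ '' O)

open Filter Topology

lemma LocallyInjective.isDiscrete_preimage_singleton {X : Type*} [TopologicalSpace X]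
    {φ : X → X} (hinj : LocallyInjective φ) (y : X) : IsDiscrete (φ ⁻¹' {y}) := by
  refine IsDiscrete.of_nhdsWithin fun z hz => le_pure_iff.2 ?_
  obtain ⟨U, hU, hUinj⟩ := hinj z
  refine mem_nhdsWithin_iff_exists_mem_nhds_inter.2 ⟨U, hU, fun u ⟨huU, hu⟩ => ?_⟩
  exact hUinj huU (mem_of_mem_nhds hU) (hu.trans hz.symm)

lemma LocallyInjective.finite_preimage_singleton_s7 {X : Type*} [TopologicalSpace X] [T1Space X]
    [CompactSpace X] {φ : X → X} (hc : Continuous φ) (hinj : LocallyInjective φ) (y : X) :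
    (φ ⁻¹' {y}).Finite :=
  (isClosed_singleton.preimage hc).isCompact.finite (hinj.isDiscrete_preimage_singleton y)

lemma Finset.sum_le_sum_of_injOn_cover {α β ι M : Type*} [AddCommMonoid M] [PartialOrder M]
    [IsOrderedAddMonoid M] {f : α → β} {b : β} {S : Finset α} {T : Finset ι} {V : ι → Set α}
    {g : α → M} {h : ι → M} (hS : ∀ u ∈ S, f u = b)
    (hinj : ∀ t ∈ T, Set.InjOn f (V t)) (hcover : ∀ u ∈ S, ∃ t ∈ T, u ∈ V t ∧ g u ≤ h t)
    (hh : ∀ t ∈ T, 0 ≤ h t) :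
    ∑ u ∈ S, g u ≤ ∑ t ∈ T, h t := by
  classical
  obtain rfl | ⟨u₀, hu₀⟩ := S.eq_empty_or_nonempty
  · simpa using Finset.sum_nonneg hh
  have : Nonempty ι := let ⟨t, _⟩ := hcover u₀ hu₀; ⟨t⟩
  choose! i hiT hiV hgh using hcover
  have hi : Set.InjOn i S := fun u hu v hv huv =>
    hinj (i u) (hiT u hu) (hiV u hu) (huv ▸ hiV v hv) ((hS u hu).trans (hS v hv).symm)
  calc ∑ u ∈ S, g u ≤ ∑ u ∈ S, h (i u) := Finset.sum_le_sum hgh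
    _ = ∑ t ∈ S.image i, h t := (Finset.sum_image hi).symm
    _ ≤ ∑ t ∈ T, h t := Finset.sum_le_sum_of_subset_of_nonneg
          (Finset.image_subset_iff.2 hiT) fun t ht _ => hh t ht

namespace IsCocycle

variable {X : Type*} [TopologicalSpace X] {φ : X → X} {ω : X → ℝ}

lemma sum_toFinset_preimage (hω : IsCocycle φ ω) {y : X} (hfin : (φ ⁻¹' {y}).Finite) :
    ∑ u ∈ hfin.toFinset, ω u = 1 := by
  rw [← finsum_mem_coe_finset, hfin.coe_toFinset, hω.2.2 y]

lemma exists_pos (hω : IsCocycle φ ω) (y : X) : ∃ x ∈ φ ⁻¹' {y}, 0 < ω x := by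
  obtain ⟨x, hx, hne⟩ := exists_ne_zero_of_finsum_mem_ne_zero (hω.2.2 y ▸ one_ne_zero)
  exact ⟨x, hx, (hω.2.1 x).lt_of_ne' hne⟩

variable [CompactSpace X] [T2Space X]

theorem image_mem_nhds (hω : IsCocycle φ ω) (hc : Continuous φ) (hinj : LocallyInjective φ)
    {x : X} (hx : 0 < ω x) {O : Set X} (hO : O ∈ 𝓝 x) : φ '' O ∈ 𝓝 (φ x) := by
  classical
  have hfin := hinj.finite_preimage_singleton_s7 hc
  set F := (hfin (φ x)).toFinset
  have hxF : x ∈ F := (hfin (φ x)).mem_toFinset.2 rfl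
  obtain ⟨ε, hε, hFε⟩ := exists_pos_mul_lt hx (F.card : ℝ)
  choose U hU hUinj using hinj
  have hnear : ∀ᶠ y' in 𝓝 (φ x), ∀ u ∈ φ ⁻¹' {y'},
      u ∈ O ∨ ∃ z ∈ F.erase x, u ∈ U z ∧ ω u ≤ ω z + ε := by
    refine hc.isClosedMap.eventually_nhds_fiber (φ x) fun z hz => ?_
    by_cases hzx : z = x
    · subst hzx
      filter_upwards [hO] with u hu using Or.inl hu
    have hωz : ∀ᶠ u in 𝓝 z, ω u ≤ ω z + ε :=
      hω.1.continuousAt.eventually (ge_mem_nhds (lt_add_of_pos_right _ hε))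
    filter_upwards [hU z, hωz] with u huU huω
    exact Or.inr ⟨z, Finset.mem_erase.2 ⟨hzx, (hfin (φ x)).mem_toFinset.2 hz⟩, huU, huω⟩
  by_contra hnot
  obtain ⟨y', hy'O, hy'⟩ := ((not_eventually.1 hnot).and_eventually hnear).exists
  have hcover : ∀ u ∈ (hfin y').toFinset, ∃ z ∈ F.erase x, u ∈ U z ∧ ω u ≤ ω z + ε := by
    intro u hu
    rw [Set.Finite.mem_toFinset] at hu
    exact (hy' u hu).resolve_left fun huO => hy'O ⟨u, huO, hu⟩
  have hle := Finset.sum_le_sum_of_injOn_cover (fun u hu => (hfin y').mem_toFinset.1 hu)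
    (fun z _ => hUinj z) hcover fun z _ => add_nonneg (hω.2.1 z) hε.le
  have hsumF : ∑ z ∈ F, (ω z + ε) = 1 + F.card * ε := by
    rw [Finset.sum_add_distrib, hω.sum_toFinset_preimage, Finset.sum_const, nsmul_eq_mul]
  rw [hω.sum_toFinset_preimage, Finset.sum_erase_eq_sub hxF, hsumF] at hle
  linarith

theorem locallyOpenAt (hω : IsCocycle φ ω) (hc : Continuous φ) (hinj : LocallyInjective φ)
    {x : X} (hx : 0 < ω x) : LocallyOpenAt φ x := by
  refine ⟨{u | 0 < ω u}, isOpen_lt continuous_const hω.1, hx, fun O hON hO => ?_⟩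
  rw [isOpen_iff_mem_nhds]
  rintro _ ⟨u, hu, rfl⟩
  exact hω.image_mem_nhds hc hinj (hON hu) (hO.mem_nhds hu)

end IsCocycle

/-- If a CSLI system admits a cocycle, then every point has a preimage at which
the map is locally open. -/
theorem exists_locallyOpenAt_of_cocycle {X : Type*} [MetricSpace X] [CompactSpace X]
    (φ : X → X) (hφ : CSLI φ) (ω : X → ℝ) (hω : IsCocycle φ ω) :
    ∀ y : X, ∃ x ∈ φ ⁻¹' {y}, LocallyOpenAt φ x := by
  intro y
  obtain ⟨x, hxy, hx⟩ := hω.exists_pos y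
  exact ⟨x, hxy, hω.locallyOpenAt hφ.1 hφ.2.2 hx⟩
end

section
/- Let X be a zero-dimensional compact metric space (i.e., X admits a basis of clopen sets) and φ : X → X a CSLI map. If for every y ∈ X there exists a point x ∈ φ⁻¹({y}) such that φ is locally open at x, then there exists a cocycle for φ. -/
/-! Every point `y` has a preimage `x` at which `φ` is locally open; a basic clopen neighbourhood
`U` of `x`, small enough for `φ` to be injective and open on it, has clopen image `φ '' U ∋ y`
(closed by compactness). Finitely many such images cover `X`; disjointifying them yields a
clopen set `V` that `φ` maps bijectively onto `X`, and the indicator of `V` is a cocycle. -/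

open Set

section Disjointify

variable {X Y : Type*} [TopologicalSpace X] [TopologicalSpace Y] {φ : X → Y}

lemma exists_clopen_injOn_image_eq_union (hφ : Continuous φ) {V s : Set X}
    (hV : IsClopen V) (hVinj : InjOn φ V) (hVimg : IsClopen (φ '' V))
    (hs : IsClopen s) (hsinj : InjOn φ s) (hsimg : IsClopen (φ '' s)) :
    ∃ W, IsClopen W ∧ InjOn φ W ∧ φ '' W = φ '' V ∪ φ '' s := by
  -- the part of `s` lying over points not yet covered by `φ '' V`
  set W := s ∩ φ ⁻¹' (φ '' s \ φ '' V)
  have hWimg : φ '' W = φ '' s \ φ '' V := by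
    rw [image_inter_preimage, inter_eq_right.2 sdiff_subset]
  refine ⟨V ∪ W, hV.union (hs.inter ((hsimg.diff hVimg).preimage hφ)), ?_, ?_⟩
  · have hdisj : Disjoint V W := disjoint_left.2 fun a ha haW => haW.2.2 ⟨a, ha, rfl⟩
    exact (injOn_union hdisj).2
      ⟨hVinj, hsinj.mono inter_subset_left, fun a ha b hb hab => hb.2.2 ⟨a, ha, hab⟩⟩
  · rw [image_union, hWimg, union_sdiff_self]

lemma exists_clopen_injOn_image_eq_biUnion {ι : Type*} (hφ : Continuous φ) (U : ι → Set X)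
    (t : Finset ι) (hU : ∀ i ∈ t, IsClopen (U i) ∧ InjOn φ (U i) ∧ IsClopen (φ '' U i)) :
    ∃ V, IsClopen V ∧ InjOn φ V ∧ φ '' V = ⋃ i ∈ t, φ '' U i := by
  classical
  induction t using Finset.induction_on with
  | empty => exact ⟨∅, isClopen_empty, injOn_empty φ, by simp⟩
  | insert a t _ ih =>
    obtain ⟨V, hV, hVinj, hVimg⟩ := ih fun i hi => hU i (Finset.mem_insert_of_mem hi)
    obtain ⟨hUa, hUainj, hUaimg⟩ := hU a (Finset.mem_insert_self a t)
    have hVimg_clopen : IsClopen (φ '' V) :=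
      hVimg ▸ isClopen_biUnion_finset fun i hi => (hU i (Finset.mem_insert_of_mem hi)).2.2
    obtain ⟨W, hW, hWinj, hWimg⟩ :=
      exists_clopen_injOn_image_eq_union hφ hV hVinj hVimg_clopen hUa hUainj hUaimg
    refine ⟨W, hW, hWinj, ?_⟩
    rw [hWimg, hVimg, Finset.set_biUnion_insert, union_comm]

end Disjointify

lemma LocallyOpenAt.exists_clopen_injOn {X : Type*} [TopologicalSpace X] [CompactSpace X]
    [T2Space X] {φ : X → X} (hφ : Continuous φ) (hli : LocallyInjective φ)
    {B : Set (Set X)} (hB : ∀ s ∈ B, IsClopen s) (hBasis : TopologicalSpace.IsTopologicalBasis B)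
    {x : X} (hx : LocallyOpenAt φ x) :
    ∃ U, IsClopen U ∧ x ∈ U ∧ InjOn φ U ∧ IsClopen (φ '' U) := by
  obtain ⟨N, hN, hxN, hNopen⟩ := hx
  obtain ⟨S, hS, hSinj⟩ := hli x
  obtain ⟨O, hOS, hO, hxO⟩ := mem_nhds_iff.1 hS
  obtain ⟨U, hUB, hxU, hUNO⟩ :=
    hBasis.exists_subset_of_mem_open (mem_inter hxN hxO) (hN.inter hO)
  have hU := hB U hUB
  refine ⟨U, hU, hxU, hSinj.mono (hUNO.trans (inter_subset_right.trans hOS)),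
    (hU.isClosed.isCompact.image hφ).isClosed, hNopen U (hUNO.trans inter_subset_left) hU.isOpen⟩

lemma isCocycle_indicator_one {X : Type*} [TopologicalSpace X] {φ : X → X} {V : Set X}
    (hV : IsClopen V) (hinj : InjOn φ V) (himg : φ '' V = univ) :
    IsCocycle φ (V.indicator 1) := by
  refine ⟨hV.continuous_indicator continuous_const, fun x => indicator_nonneg (by simp) x,
    fun y => ?_⟩
  obtain ⟨x, hxV, rfl⟩ : y ∈ φ '' V := himg ▸ mem_univ y
  have hfiber : φ ⁻¹' {φ x} ∩ V = {x} ∩ V := by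
    ext z
    exact ⟨fun ⟨hz, hzV⟩ => ⟨hinj hzV hxV hz, hzV⟩, fun ⟨hz, hzV⟩ => ⟨congrArg φ hz, hzV⟩⟩
  calc ∑ᶠ z ∈ φ ⁻¹' {φ x}, V.indicator 1 z
      = ∑ᶠ z ∈ ({x} : Set X), V.indicator (1 : X → ℝ) z :=
        finsum_mem_inter_support_eq _ _ _ <| by
          rwa [support_indicator, Function.support_one, inter_univ]
    _ = 1 := by simp [hxV]

/-- For a CSLI map of a zero-dimensional compact metric space (one admitting a basis
of clopen sets), if every point has a preimage at which the map is locally open,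
then a cocycle exists. -/
theorem exists_cocycle_of_zero_dimensional {X : Type*} [MetricSpace X] [CompactSpace X]
    (φ : X → X) (hφ : CSLI φ)
    (hzd : ∃ B : Set (Set X), (∀ s ∈ B, IsClopen s) ∧ TopologicalSpace.IsTopologicalBasis B)
    (hlo : ∀ y : X, ∃ x ∈ φ ⁻¹' {y}, LocallyOpenAt φ x) :
    ∃ ω : X → ℝ, IsCocycle φ ω := by
  obtain ⟨hc, -, hli⟩ := hφ
  obtain ⟨B, hB, hBasis⟩ := hzd
  have hcover : ∀ y, ∃ U, IsClopen U ∧ InjOn φ U ∧ IsClopen (φ '' U) ∧ y ∈ φ '' U := by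
    intro y
    obtain ⟨x, rfl, hx⟩ := hlo y
    obtain ⟨U, hU, hxU, hinj, himg⟩ := hx.exists_clopen_injOn hc hli hB hBasis
    exact ⟨U, hU, hinj, himg, mem_image_of_mem φ hxU⟩
  choose U hU hinj himg hyU using hcover
  obtain ⟨t, ht⟩ := isCompact_univ.elim_finite_subcover (fun y => φ '' U y)
    (fun y => (himg y).isOpen) fun y _ => mem_iUnion.2 ⟨y, hyU y⟩
  obtain ⟨V, hV, hVinj, hVimg⟩ :=
    exists_clopen_injOn_image_eq_biUnion hc U t fun y _ => ⟨hU y, hinj y, himg y⟩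
  exact ⟨V.indicator 1, isCocycle_indicator_one hV hVinj (hVimg ▸ univ_subset_iff.1 ht)⟩
end

section
/- Let 𝒫 be a divisible abelian semigroup and let d ↦ φ_d be an action of 𝒫 on a compact metric space X by CSLI maps (so φ_{d+e} = φ_d ∘ φ_e for all d, e ∈ 𝒫). Then either φ_d is a homeomorphism for every d ∈ 𝒫, or φ_d is a homeomorphism for no d ∈ 𝒫. -/
/-- `iterAdd n p` is the `(n+1)`-fold sum `p + p + ⋯ + p`, so that every
`iterAdd n p` is a positive multiple of `p`. -/
def iterAdd {P : Type*} [AddCommSemigroup P] : ℕ → P → P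
  | 0, p => p
  | n + 1, p => p + iterAdd n p

/-- A sequence `d` in an abelian semigroup is fundamental if each `d k` is a
multiple of `d (k+1)` by an integer `> 1`, and every element of the semigroup is
a positive multiple of some `d k`. -/
def IsFundamentalSeq {P : Type*} [AddCommSemigroup P] (d : ℕ → P) : Prop :=
  (∃ n : ℕ → ℕ, ∀ k, 1 ≤ n k ∧ d k = iterAdd (n k) (d (k + 1))) ∧
    ∀ p : P, ∃ k m : ℕ, p = iterAdd m (d k)

/-- An abelian semigroup is divisible if it contains a fundamental sequence. -/
def IsDivisibleSemigroup (P : Type*) [AddCommSemigroup P] : Prop :=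
  ∃ d : ℕ → P, IsFundamentalSeq d

/-!
If `Φ p` is injective and `q` is any element, pick a common divisor `r` of `p` and `q` in the
fundamental sequence. Since `Φ (m r) = (Φ r)^m`, injectivity passes from `Φ p` down to `Φ r` and
back up to `Φ q`. So either every `Φ d` is injective, hence (being a continuous surjection of a
compact Hausdorff space) a homeomorphism, or none is.
-/

section iterAdd

variable {P : Type*} [AddCommSemigroup P]

lemma iterAdd_add_iterAdd (a b : ℕ) (p : P) :
    iterAdd a p + iterAdd b p = iterAdd (a + b + 1) p := by
  induction a with
  | zero => rw [Nat.zero_add]; rfl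
  | succ a ih =>
    rw [show a + 1 + b + 1 = (a + b + 1) + 1 by omega]
    show (p + iterAdd a p) + iterAdd b p = p + iterAdd (a + b + 1) p
    rw [add_assoc, ih]

lemma iterAdd_iterAdd (m n : ℕ) (p : P) :
    iterAdd m (iterAdd n p) = iterAdd (m * n + m + n) p := by
  induction m with
  | zero => rw [Nat.zero_mul, Nat.zero_add]; rfl
  | succ m ih =>
    show iterAdd n p + iterAdd m (iterAdd n p) = _
    rw [ih, iterAdd_add_iterAdd]
    congr 1
    ring

lemma IsFundamentalSeq.exists_iterAdd_of_le {d : ℕ → P} (hd : IsFundamentalSeq d) {k j : ℕ}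
    (hkj : k ≤ j) : ∃ m, d k = iterAdd m (d j) := by
  obtain ⟨n, hn⟩ := hd.1
  induction j, hkj using Nat.le_induction with
  | base => exact ⟨0, rfl⟩
  | succ j _ ih =>
    obtain ⟨m, hm⟩ := ih
    exact ⟨m * n j + m + n j, by rw [hm, (hn j).2, iterAdd_iterAdd]⟩

lemma IsDivisibleSemigroup.exists_common_divisor (hP : IsDivisibleSemigroup P) (p q : P) :
    ∃ r : P, ∃ a b : ℕ, p = iterAdd a r ∧ q = iterAdd b r := by
  obtain ⟨d, hd⟩ := hP
  obtain ⟨k, m, rfl⟩ := hd.2 p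
  obtain ⟨j, m', rfl⟩ := hd.2 q
  obtain ⟨a, ha⟩ := hd.exists_iterAdd_of_le (le_max_left k j)
  obtain ⟨b, hb⟩ := hd.exists_iterAdd_of_le (le_max_right k j)
  exact ⟨d (max k j), _, _, by rw [ha, iterAdd_iterAdd], by rw [hb, iterAdd_iterAdd]⟩

end iterAdd

section action

variable {P X : Type*} [AddCommSemigroup P] {Φ : P → X → X}

lemma injective_iterAdd_iff (hact : ∀ d e : P, Φ (d + e) = Φ d ∘ Φ e) (m : ℕ) (p : P) :
    Function.Injective (Φ (iterAdd m p)) ↔ Function.Injective (Φ p) := by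
  induction m with
  | zero => exact Iff.rfl
  | succ m ih =>
    rw [show Φ (iterAdd (m + 1) p) = Φ p ∘ Φ (iterAdd m p) from hact p (iterAdd m p)]
    exact ⟨fun h => ih.mp h.of_comp, fun h => h.comp (ih.mpr h)⟩

lemma IsDivisibleSemigroup.injective_of_injective (hP : IsDivisibleSemigroup P)
    (hact : ∀ d e : P, Φ (d + e) = Φ d ∘ Φ e) {p : P} (hp : Function.Injective (Φ p)) (q : P) :
    Function.Injective (Φ q) := by
  obtain ⟨r, a, b, rfl, rfl⟩ := hP.exists_common_divisor p q
  exact (injective_iterAdd_iff hact b r).mpr ((injective_iterAdd_iff hact a r).mp hp)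

end action

lemma Continuous.exists_homeomorph_of_bijective {X : Type*} [TopologicalSpace X] [CompactSpace X]
    [T2Space X] {φ : X → X} (hc : Continuous φ) (hb : Function.Bijective φ) :
    ∃ e : X ≃ₜ X, ⇑e = φ :=
  ⟨hc.homeoOfEquivCompactToT2 (f := Equiv.ofBijective φ hb), rfl⟩

/-- For an action of a divisible abelian semigroup by CSLI maps on a compact metric
space, either every map of the action is a homeomorphism, or none is. -/
theorem all_or_none_homeomorph {P : Type*} [AddCommSemigroup P]
    (hP : IsDivisibleSemigroup P) {X : Type*} [MetricSpace X] [CompactSpace X]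
    (Φ : P → X → X) (hact : ∀ d e : P, Φ (d + e) = Φ d ∘ Φ e)
    (hφ : ∀ d : P, CSLI (Φ d)) :
    (∀ d : P, ∃ e : X ≃ₜ X, ⇑e = Φ d) ∨ (∀ d : P, ¬ ∃ e : X ≃ₜ X, ⇑e = Φ d) := by
  by_cases h : ∃ p, Function.Injective (Φ p)
  · obtain ⟨p, hp⟩ := h
    left
    intro q
    exact (hφ q).1.exists_homeomorph_of_bijective
      ⟨hP.injective_of_injective hact hp q, (hφ q).2.1⟩
  · right
    rintro q ⟨e, he⟩
    exact h ⟨q, he ▸ e.injective⟩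
end

section
/- Let 𝒫 be a divisible abelian semigroup acting on a compact metric space X by CSLI maps d ↦ φ_d (so φ_{d+e} = φ_d ∘ φ_e), and suppose none of the maps φ_d is a homeomorphism. Then there exists x₀ ∈ X such that |φ_d⁻¹({x₀})| > 1 for all d ∈ 𝒫, and furthermore there exist points u₀ ≠ v₀ in X such that φ_d(u₀) = φ_d(v₀) for all d ∈ 𝒫. -/
/-!
A pair `u ≠ v` identified by one `φ_d` is identified by every `φ_{d+e} = φ_e ∘ φ_d`, and a point
with nontrivial fiber under `φ_d` keeps one under every `φ_{d+e} = φ_d ∘ φ_e`, because `φ_e` is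
surjective. Local injectivity keeps pairs identified by `φ_d` away from the diagonal, so both sets
are closed, and they are nonempty since a bijective continuous self-map of a compact Hausdorff
space would be a homeomorphism. Along a fundamental sequence they decrease, so Cantor's
intersection theorem gives a common element, which then works for every element of `𝒫`.
-/

open Function Set

lemma subset_iterAdd {P Y : Type*} [AddCommSemigroup P] {S : P → Set Y}
    (hS : ∀ p e, S p ⊆ S (p + e)) (m : ℕ) (p : P) : S p ⊆ S (iterAdd m p) := by
  cases m with
  | zero => exact subset_rfl
  | succ m => exact hS p (iterAdd m p)

lemma IsFundamentalSeq.nonempty_iInter {P Y : Type*} [AddCommSemigroup P] [TopologicalSpace Y]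
    [CompactSpace Y] {d : ℕ → P} (hd : IsFundamentalSeq d) {S : P → Set Y}
    (hS : ∀ p e, S p ⊆ S (p + e)) (hclosed : ∀ p, IsClosed (S p)) (hne : ∀ p, (S p).Nonempty) :
    (⋂ p, S p).Nonempty := by
  obtain ⟨⟨n, hn⟩, hdiv⟩ := hd
  have hanti : ∀ k, S (d (k + 1)) ⊆ S (d k) := fun k =>
    (hn k).2 ▸ subset_iterAdd hS (n k) (d (k + 1))
  obtain ⟨y, hy⟩ := IsCompact.nonempty_iInter_of_sequence_nonempty_isCompact_isClosed
    (fun k => S (d k)) hanti (fun k => hne _) (hclosed _).isCompact (fun k => hclosed _)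
  refine ⟨y, mem_iInter.2 fun p => ?_⟩
  obtain ⟨k, m, rfl⟩ := hdiv p
  exact subset_iterAdd hS m (d k) (mem_iInter.1 hy k)

section IdentifiedPairs

variable {X : Type*}

def identifiedPairs (φ : X → X) : Set (X × X) :=
  {q | q.1 ≠ q.2 ∧ φ q.1 = φ q.2}

def multifiberPoints (φ : X → X) : Set X :=
  {x | (φ ⁻¹' {x}).Nontrivial}

lemma identifiedPairs_subset_comp (φ ψ : X → X) :
    identifiedPairs φ ⊆ identifiedPairs (ψ ∘ φ) :=
  fun _ ⟨hne, heq⟩ => ⟨hne, congrArg ψ heq⟩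

lemma multifiberPoints_subset_comp (φ : X → X) {ψ : X → X} (hψ : Surjective ψ) :
    multifiberPoints φ ⊆ multifiberPoints (φ ∘ ψ) :=
  fun _ hx => Set.Nontrivial.preimage (f := ψ) hx hψ

lemma identifiedPairs_nonempty_iff {φ : X → X} :
    (identifiedPairs φ).Nonempty ↔ ¬ Injective φ := by
  simp only [identifiedPairs, not_injective_iff, Set.Nonempty, Prod.exists, mem_ofPred_eq, and_comm]

lemma image_identifiedPairs (φ : X → X) :
    (φ ∘ Prod.fst) '' identifiedPairs φ = multifiberPoints φ := by
  ext x
  constructor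
  · rintro ⟨⟨u, v⟩, ⟨hne, heq⟩, rfl⟩
    exact ⟨u, rfl, v, heq.symm, hne⟩
  · rintro ⟨u, hu, v, hv, hne⟩
    exact ⟨(u, v), ⟨hne, hu.trans hv.symm⟩, hu⟩

lemma multifiberPoints_nonempty_iff {φ : X → X} :
    (multifiberPoints φ).Nonempty ↔ ¬ Injective φ := by
  rw [← image_identifiedPairs, image_nonempty, identifiedPairs_nonempty_iff]

lemma isClosed_identifiedPairs [TopologicalSpace X] [T2Space X] {φ : X → X}
    (hc : Continuous φ) (hl : LocallyInjective φ) : IsClosed (identifiedPairs φ) := by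
  refine isOpen_compl_iff.1 (isOpen_iff_mem_nhds.2 fun q hq => ?_)
  by_cases hdiag : q.1 = q.2
  · obtain ⟨U, hU, hinj⟩ := hl q.1
    have hUU : U ×ˢ U ∈ nhds q := prod_mem_nhds hU (hdiag ▸ hU)
    filter_upwards [hUU] with r hr hr'
    exact hr'.1 (hinj hr.1 hr.2 hr'.2)
  · have hsep : φ q.1 ≠ φ q.2 := fun h => hq ⟨hdiag, h⟩
    filter_upwards [(isOpen_ne_fun (hc.comp continuous_fst) (hc.comp continuous_snd)).mem_nhds
      hsep] with r hr hr'
    exact absurd hr'.2 hr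

lemma isClosed_multifiberPoints [TopologicalSpace X] [CompactSpace X] [T2Space X] {φ : X → X}
    (hc : Continuous φ) (hl : LocallyInjective φ) : IsClosed (multifiberPoints φ) := by
  rw [← image_identifiedPairs]
  exact ((isClosed_identifiedPairs hc hl).isCompact.image (hc.comp continuous_fst)).isClosed

end IdentifiedPairs

lemma not_injective_of_not_homeomorph {X : Type*} [TopologicalSpace X] [CompactSpace X]
    [T2Space X] {φ : X → X} (hc : Continuous φ) (hs : Surjective φ)
    (hnh : ¬ ∃ e : X ≃ₜ X, ⇑e = φ) : ¬ Injective φ := fun hi =>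
  hnh ⟨Continuous.homeoOfEquivCompactToT2 (f := Equiv.ofBijective φ ⟨hi, hs⟩) hc, rfl⟩

/-- If a divisible abelian semigroup acts by CSLI maps none of which is a
homeomorphism, then there is a point `x₀` whose fiber under every map of the
action has more than one element, and there are two distinct points identified
by every map of the action. -/
theorem exists_multifiber_point_of_no_homeomorph {P : Type*} [AddCommSemigroup P]
    (hP : IsDivisibleSemigroup P) {X : Type*} [MetricSpace X] [CompactSpace X]
    (Φ : P → X → X) (hact : ∀ d e : P, Φ (d + e) = Φ d ∘ Φ e)
    (hφ : ∀ d : P, CSLI (Φ d)) (hnh : ∀ d : P, ¬ ∃ e : X ≃ₜ X, ⇑e = Φ d) :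
    (∃ x₀ : X, ∀ d : P, (Φ d ⁻¹' {x₀}).Nontrivial) ∧
      ∃ u₀ v₀ : X, u₀ ≠ v₀ ∧ ∀ d : P, Φ d u₀ = Φ d v₀ := by
  obtain ⟨d, hd⟩ := hP
  have hninj : ∀ p, ¬ Injective (Φ p) := fun p =>
    not_injective_of_not_homeomorph (hφ p).1 (hφ p).2.1 (hnh p)
  obtain ⟨x₀, hx₀⟩ := hd.nonempty_iInter (S := fun p => multifiberPoints (Φ p))
    (fun p e => hact p e ▸ multifiberPoints_subset_comp _ (hφ e).2.1)
    (fun p => isClosed_multifiberPoints (hφ p).1 (hφ p).2.2)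
    (fun p => multifiberPoints_nonempty_iff.2 (hninj p))
  obtain ⟨⟨u₀, v₀⟩, huv⟩ := hd.nonempty_iInter (S := fun p => identifiedPairs (Φ p))
    (fun p e => add_comm e p ▸ hact e p ▸ identifiedPairs_subset_comp _ _)
    (fun p => isClosed_identifiedPairs (hφ p).1 (hφ p).2.2)
    (fun p => identifiedPairs_nonempty_iff.2 (hninj p))
  exact ⟨⟨x₀, mem_iInter.1 hx₀⟩, u₀, v₀, (mem_iInter.1 huv (d 0)).1,
    fun p => (mem_iInter.1 huv p).2⟩
end

section
/- Let 𝒫 be a divisible abelian semigroup acting on a compact metric space X by CSLI maps d ↦ φ_d (so φ_{d+e} = φ_d ∘ φ_e). If the family {φ_d : d ∈ 𝒫} separates the points of X (i.e., for any u ≠ v in X there exists d ∈ 𝒫 with φ_d(u) ≠ φ_d(v)), then every map φ_d, d ∈ 𝒫, is a homeomorphism of X. -/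
/-!
Along a fundamental sequence `(d k)` every `g k = φ (d k)` is an iterate of `g j` for `j ≥ k`, and
every `φ d` is an iterate of some `g k`, so it suffices that each `g K` is injective. If it is not,
no `g j` with `j ≥ K` is injective either, and a pair identified by `g j` is identified by every
`g k` with `k ≤ j`. Local injectivity of `g K` makes the set of pairs of distinct points identified
by `g K` closed, so by compactness the decreasing closed sets of such pairs that are also
identified by `g j` have a common element: two distinct points identified by every `g k`, hence by
every `φ d`, against separation. A continuous bijection of a compact Hausdorff space is a
homeomorphism.
-/

open Function

theorem LocallyInjective.isClosed_setOf_eq_ne {X : Type*} [TopologicalSpace X] [T2Space X]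
    {f : X → X} (hf : LocallyInjective f) (hcont : Continuous f) :
    IsClosed {p : X × X | f p.1 = f p.2 ∧ p.1 ≠ p.2} := by
  refine isOpen_compl_iff.mp (isOpen_iff_mem_nhds.mpr fun p hp => ?_)
  by_cases hfp : f p.1 = f p.2
  · obtain ⟨x, y⟩ := p
    obtain rfl : x = y := by simpa [hfp] using hp
    obtain ⟨U, hU, hinj⟩ := hf x
    filter_upwards [prod_mem_nhds hU hU] with q hq hS
    exact hS.2 (hinj hq.1 hq.2 hS.1)
  · have hopen : IsOpen {q : X × X | f q.1 ≠ f q.2} :=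
      (isClosed_eq (hcont.comp continuous_fst) (hcont.comp continuous_snd)).isOpen_compl
    filter_upwards [hopen.mem_nhds hfp] with q hq hS
    exact hq hS.1

theorem exists_eq_iterate_of_le {α : Type*} {g : ℕ → α → α}
    (h : ∀ k, ∃ N, g k = (g (k + 1))^[N + 1]) {k j : ℕ} (hkj : k ≤ j) :
    ∃ N, g k = (g j)^[N + 1] := by
  induction j, hkj using Nat.le_induction with
  | base => exact ⟨0, (iterate_one _).symm⟩
  | succ j _ ih =>
    obtain ⟨N, hN⟩ := ih
    obtain ⟨M, hM⟩ := h j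
    refine ⟨M * N + M + N, ?_⟩
    rw [hN, hM, ← iterate_mul]
    congr 1
    ring

theorem injective_of_forall_eq_iterate {X : Type*} [TopologicalSpace X] [CompactSpace X]
    [T2Space X] {g : ℕ → X → X} (hcont : ∀ k, Continuous (g k))
    (htower : ∀ k j, k ≤ j → ∃ N, g k = (g j)^[N + 1])
    (hsep : ∀ a b, (∀ k, g k a = g k b) → a = b) {K : ℕ} (hK : LocallyInjective (g K)) :
    Injective (g K) := by
  have hker : ∀ k j, k ≤ j → ∀ a b, g j a = g j b → g k a = g k b := by
    intro k j hkj a b h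
    obtain ⟨N, hN⟩ := htower k j hkj
    rw [hN, iterate_succ_apply, iterate_succ_apply, h]
  by_contra hnot
  let C : ℕ → Set (X × X) := fun j =>
    {p | g j p.1 = g j p.2} ∩ {p | g K p.1 = g K p.2 ∧ p.1 ≠ p.2}
  have hclosed : ∀ j, IsClosed (C j) := fun j =>
    (isClosed_eq ((hcont j).comp continuous_fst) ((hcont j).comp continuous_snd)).inter
      (hK.isClosed_setOf_eq_ne (hcont K))
  have hanti : ∀ j, C (j + 1) ⊆ C j := fun j p hp =>
    ⟨hker j (j + 1) j.le_succ _ _ hp.1, hp.2⟩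
  have hne : ∀ j, (C j).Nonempty := by
    intro j
    have hnot_max : ¬ Injective (g (max j K)) := fun hinj => by
      obtain ⟨N, hN⟩ := htower K (max j K) (le_max_right j K)
      exact hnot (hN ▸ hinj.iterate (N + 1))
    obtain ⟨a, b, hab, hab_ne⟩ := not_injective_iff.mp hnot_max
    exact ⟨(a, b), hker j _ (le_max_left j K) a b hab,
      hker K _ (le_max_right j K) a b hab, hab_ne⟩
  obtain ⟨⟨a, b⟩, hab⟩ := IsCompact.nonempty_iInter_of_sequence_nonempty_isCompact_isClosed C
    hanti hne (hclosed 0).isCompact hclosed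
  rw [Set.mem_iInter] at hab
  exact (hab 0).2.2 (hsep a b fun k => (hab k).1)

section Action

variable {P X : Type*} [AddCommSemigroup P] {Φ : P → X → X}

theorem map_iterAdd (hact : ∀ d e : P, Φ (d + e) = Φ d ∘ Φ e) (m : ℕ) (p : P) :
    Φ (iterAdd m p) = (Φ p)^[m + 1] := by
  induction m with
  | zero => rfl
  | succ m ih => rw [iterate_succ', ← ih]; exact hact p (iterAdd m p)

theorem IsFundamentalSeq.exists_map_eq_iterate {d : ℕ → P} (hd : IsFundamentalSeq d)
    (hact : ∀ d e : P, Φ (d + e) = Φ d ∘ Φ e) (p : P) : ∃ k m, Φ p = (Φ (d k))^[m + 1] := by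
  obtain ⟨k, m, rfl⟩ := hd.2 p
  exact ⟨k, m, map_iterAdd hact m (d k)⟩

theorem IsFundamentalSeq.exists_map_eq_iterate_of_le {d : ℕ → P} (hd : IsFundamentalSeq d)
    (hact : ∀ d e : P, Φ (d + e) = Φ d ∘ Φ e) {k j : ℕ} (hkj : k ≤ j) :
    ∃ N, Φ (d k) = (Φ (d j))^[N + 1] := by
  obtain ⟨n, hn⟩ := hd.1
  refine exists_eq_iterate_of_le (g := fun k => Φ (d k)) (fun k => ⟨n k, ?_⟩) hkj
  rw [(hn k).2, map_iterAdd hact]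

end Action

/-- If a divisible abelian semigroup acts by CSLI maps on a compact metric space
and the action separates points, then every map of the action is a homeomorphism. -/
theorem homeomorph_of_separating {P : Type*} [AddCommSemigroup P]
    (hP : IsDivisibleSemigroup P) {X : Type*} [MetricSpace X] [CompactSpace X]
    (Φ : P → X → X) (hact : ∀ d e : P, Φ (d + e) = Φ d ∘ Φ e)
    (hφ : ∀ d : P, CSLI (Φ d))
    (hsep : ∀ u v : X, u ≠ v → ∃ d : P, Φ d u ≠ Φ d v) :
    ∀ d : P, ∃ e : X ≃ₜ X, ⇑e = Φ d := by
  obtain ⟨d, hd⟩ := hP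
  have hsep_seq : ∀ a b : X, (∀ k, Φ (d k) a = Φ (d k) b) → a = b := by
    intro a b hab
    by_contra hne
    obtain ⟨p, hp⟩ := hsep a b hne
    obtain ⟨k, m, hk⟩ := hd.exists_map_eq_iterate hact p
    exact hp (by rw [hk, iterate_succ_apply, iterate_succ_apply, hab k])
  have hinj : ∀ k, Injective (Φ (d k)) := fun k =>
    injective_of_forall_eq_iterate (fun j => (hφ (d j)).1)
      (fun _ _ => hd.exists_map_eq_iterate_of_le hact) hsep_seq (hφ (d k)).2.2
  intro p
  obtain ⟨k, m, hk⟩ := hd.exists_map_eq_iterate hact p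
  have hbij : Bijective (Φ p) := ⟨hk ▸ (hinj k).iterate (m + 1), (hφ p).2.1⟩
  exact ⟨(hφ p).1.homeoOfEquivCompactToT2 (f := Equiv.ofBijective _ hbij), rfl⟩
end

section
/- There exists a compact metric space X and a CSLI map φ : X → X such that φ admits no cocycle; that is, there is no continuous function ω : X → ℝ with ω ≥ 0 and ∑_{x ∈ φ⁻¹({y})} ω(x) = 1 for all y ∈ X. In particular, there exists a CSLI map on a compact metric space that is not a local homeomorphism. -/
/-!
Let `S` be the set of points whose fibre is a single point. A cocycle equals `1` on `S`, hence on
its closure, so no cocycle exists once two points of `closure S` have the same image. For an open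
continuous map into a Hausdorff space `S` is closed, so the same configuration also rules out a
local homeomorphism. The example is a countable compact subset of `ℝ` on which a piecewise affine
map sends both `0` and `1` to `0`, where `0` is the limit of points `2⁻ⁱ 3⁻ⁿ` and `1` the limit of
points `1 - 2⁻ⁱ`; unique factorisation keeps the orbits of these points apart, so that their
fibres are singletons.
-/

open Set Filter Topology

section Fold

variable {X : Type*} [TopologicalSpace X] {φ : X → X}

def singletonFiberPoints (φ : X → X) : Set X := {x | ∀ z, φ z = φ x → z = x}

lemma IsCocycle.eq_one_of_mem_closure_singletonFiberPoints {ω : X → ℝ} (hω : IsCocycle φ ω) {x : X}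
    (hx : x ∈ closure (singletonFiberPoints φ)) : ω x = 1 := by
  refine closure_minimal (fun u hu => ?_) (isClosed_singleton.preimage hω.1) hx
  have hfiber : φ ⁻¹' {φ u} = {u} := eq_singleton_iff_unique_mem.2 ⟨rfl, hu⟩
  simpa [hfiber] using hω.2.2 (φ u)

lemma IsCocycle.injOn_closure_singletonFiberPoints {ω : X → ℝ} (hω : IsCocycle φ ω) :
    InjOn φ (closure (singletonFiberPoints φ)) := by
  intro x₁ h₁ x₂ h₂ heq
  by_contra hne
  have hω₁ := hω.eq_one_of_mem_closure_singletonFiberPoints h₁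
  have hω₂ := hω.eq_one_of_mem_closure_singletonFiberPoints h₂
  have hsum := hω.2.2 (φ x₁)
  -- An infinite support would make the `finsum` the junk value `0`.
  by_cases hfin : (φ ⁻¹' {φ x₁} ∩ Function.support ω).Finite
  · classical
    have hpair : ({x₁, x₂} : Finset X) ⊆ hfin.toFinset := by
      intro x hx
      rcases Finset.mem_insert.1 hx with rfl | hx
      · simp [hω₁]
      · simp [Finset.mem_singleton.1 hx, heq, hω₂]
    have := Finset.sum_le_sum_of_subset_of_nonneg hpair fun x _ _ => hω.2.1 x
    rw [Finset.sum_pair hne, hω₁, hω₂, ← finsum_mem_eq_sum ω hfin, hsum] at this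
    norm_num at this
  · rw [finsum_mem_eq_zero_of_infinite hfin] at hsum
    exact zero_ne_one hsum

lemma IsOpenMap.isClosed_singletonFiberPoints [T2Space X] (hopen : IsOpenMap φ)
    (hφ : Continuous φ) : IsClosed (singletonFiberPoints φ) := by
  refine closure_subset_iff_isClosed.1 fun x hx z hzx => ?_
  by_contra hne
  obtain ⟨U₁, U₂, hU₁, hU₂, hzU₁, hxU₂, hdisj⟩ := t2_separation hne
  have hV : IsOpen (U₂ ∩ φ ⁻¹' (φ '' U₁)) := hU₂.inter ((hopen U₁ hU₁).preimage hφ)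
  obtain ⟨u, ⟨huU₂, v, hvU₁, hvu⟩, hu⟩ := mem_closure_iff.1 hx _ hV ⟨hxU₂, z, hzU₁, hzx⟩
  exact hdisj.ne_of_mem hvU₁ huU₂ (hu v hvu)

lemma locallyInjective_restrict {s : Set X} {f : X → X} (hs : MapsTo f s s)
    (hf : ∀ x ∈ s, ∃ U ∈ 𝓝 x, InjOn f U) : LocallyInjective (hs.restrict f s s) := by
  rintro ⟨x, hx⟩
  obtain ⟨U, hU, hinj⟩ := hf x hx
  exact ⟨Subtype.val ⁻¹' U, continuous_subtype_val.continuousAt.preimage_mem_nhds hU,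
    fun y hy z hz hyz => Subtype.ext (hinj hy hz (congrArg Subtype.val hyz))⟩

end Fold

namespace CSLIExample

def powersAndZero (r : ℝ) : Set ℝ := insert 0 (range fun n : ℕ => r ^ (n + 1))

section Powers

variable {r t : ℝ}

lemma tendsto_pow_succ_nhds_zero (h₀ : 0 ≤ r) (h₁ : r < 1) :
    Tendsto (fun n : ℕ => r ^ (n + 1)) atTop (𝓝 0) :=
  (tendsto_pow_atTop_nhds_zero_of_lt_one h₀ h₁).comp (tendsto_add_atTop_nat 1)

lemma isCompact_powersAndZero (h₀ : 0 ≤ r) (h₁ : r < 1) : IsCompact (powersAndZero r) :=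
  (tendsto_pow_succ_nhds_zero h₀ h₁).isCompact_insert_range

lemma self_mem_powersAndZero : r ∈ powersAndZero r := Or.inr ⟨0, pow_one r⟩

lemma mul_mem_powersAndZero (ht : t ∈ powersAndZero r) : r * t ∈ powersAndZero r := by
  rcases ht with rfl | ⟨n, rfl⟩
  · exact Or.inl (mul_zero r)
  · exact Or.inr ⟨n + 1, pow_succ' r (n + 1)⟩

lemma eq_or_eq_mul_of_mem_powersAndZero (ht : t ∈ powersAndZero r) :
    t = r ∨ ∃ t' ∈ powersAndZero r, t = r * t' := by
  rcases ht with rfl | ⟨_ | n, rfl⟩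
  · exact Or.inr ⟨0, Or.inl rfl, (mul_zero r).symm⟩
  · exact Or.inl (pow_one r)
  · exact Or.inr ⟨_, Or.inr ⟨n, rfl⟩, pow_succ' r (n + 1)⟩

lemma mem_Icc_of_mem_powersAndZero (h₀ : 0 ≤ r) (h₁ : r ≤ 1) (ht : t ∈ powersAndZero r) :
    t ∈ Icc 0 r := by
  rcases ht with rfl | ⟨n, rfl⟩
  · exact ⟨le_rfl, h₀⟩
  · exact ⟨by positivity, pow_le_of_le_one h₀ h₁ n.succ_ne_zero⟩

end Powers

lemma half_pow_mul_third_pow_inj {p q p' q' : ℕ}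
    (h : (1 / 2 : ℝ) ^ p * (1 / 3) ^ q = (1 / 2) ^ p' * (1 / 3) ^ q') : p = p' ∧ q = q' := by
  have hnat : 2 ^ p' * 3 ^ q' = 2 ^ p * 3 ^ q := by
    have : (2 : ℝ) ^ p' * 3 ^ q' = 2 ^ p * 3 ^ q := by
      simp only [one_div, inv_pow, ← mul_inv] at h
      exact (inv_injective h).symm
    exact_mod_cast this
  have factorization_eq (m n : ℕ) :
      (2 ^ m * 3 ^ n).factorization = Finsupp.single 2 m + Finsupp.single 3 n := by
    rw [Nat.factorization_mul (by positivity) (by positivity),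
      Nat.prime_two.factorization_pow, Nat.prime_three.factorization_pow]
  have h2 := congrArg (fun k => k.factorization 2) hnat
  have h3 := congrArg (fun k => k.factorization 3) hnat
  simp [factorization_eq] at h2 h3
  omega

noncomputable def g (x : ℝ) : ℝ :=
  if x < 1 / 3 then x / 3 else if x < 5 / 4 then (1 - x) / 3 else 3 * x - 4

/-- Near `0` the map `g` divides by `3`, it folds `[1/2, 1]` onto `[0, 1/6]`, and near `2` it is
`3x - 4`; the third piece, accumulating at `2`, consists of backward orbits making `g` surjective. -/
def carrier : Set ℝ :=
  image2 (· * ·) (powersAndZero (1 / 2)) (powersAndZero (1 / 3)) ∪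
    (fun u => 1 - u) '' powersAndZero (1 / 2) ∪
    image2 (fun t u => 2 - t * (1 + u)) (powersAndZero (1 / 3)) (powersAndZero (1 / 2))

lemma isCompact_carrier : IsCompact carrier := by
  have h₂ := isCompact_powersAndZero (r := 1 / 2) (by norm_num) (by norm_num)
  have h₃ := isCompact_powersAndZero (r := 1 / 3) (by norm_num) (by norm_num)
  simp only [carrier, ← image_uncurry_prod]
  exact (((h₂.prod h₃).image (by fun_prop)).union (h₂.image (by fun_prop))).union
    ((h₃.prod h₂).image (by fun_prop))

section Pieces

variable {u t : ℝ}

lemma mem_Icc_half (hu : u ∈ powersAndZero (1 / 2)) : u ∈ Icc 0 (1 / 2) :=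
  mem_Icc_of_mem_powersAndZero (by norm_num) (by norm_num) hu

lemma mem_Icc_third (ht : t ∈ powersAndZero (1 / 3)) : t ∈ Icc 0 (1 / 3) :=
  mem_Icc_of_mem_powersAndZero (by norm_num) (by norm_num) ht

lemma g_mul (hu : u ∈ powersAndZero (1 / 2)) (ht : t ∈ powersAndZero (1 / 3)) :
    g (u * t) = u * t / 3 := by
  obtain ⟨hu₀, hu₁⟩ := mem_Icc_half hu
  obtain ⟨ht₀, ht₁⟩ := mem_Icc_third ht
  rw [g, if_pos (by nlinarith)]

lemma g_one_sub (hu : u ∈ powersAndZero (1 / 2)) : g (1 - u) = u / 3 := by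
  obtain ⟨hu₀, hu₁⟩ := mem_Icc_half hu
  rw [g, if_neg (by linarith), if_pos (by linarith)]
  ring

lemma g_two_sub (hu : u ∈ powersAndZero (1 / 2)) (ht : t ∈ powersAndZero (1 / 3)) :
    g (2 - t * (1 + u)) = 2 - 3 * t * (1 + u) := by
  obtain ⟨hu₀, hu₁⟩ := mem_Icc_half hu
  obtain ⟨ht₀, ht₁⟩ := mem_Icc_third ht
  rw [g, if_neg (by nlinarith), if_neg (by nlinarith)]
  ring

end Pieces

lemma mapsTo_g : MapsTo g carrier carrier := by
  rintro _ ((⟨u, hu, t, ht, rfl⟩ | ⟨u, hu, rfl⟩) | ⟨t, ht, u, hu, rfl⟩)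
  · rw [g_mul hu ht, mul_div_assoc, div_eq_inv_mul, ← one_div]
    exact Or.inl (Or.inl ⟨u, hu, _, mul_mem_powersAndZero ht, rfl⟩)
  · rw [g_one_sub hu, div_eq_mul_one_div]
    exact Or.inl (Or.inl ⟨u, hu, _, self_mem_powersAndZero, rfl⟩)
  · rw [g_two_sub hu ht]
    rcases eq_or_eq_mul_of_mem_powersAndZero ht with rfl | ⟨t', ht', rfl⟩
    · exact Or.inl (Or.inr ⟨u, hu, by ring⟩)
    · exact Or.inr ⟨t', ht', u, hu, by ring⟩

lemma surjOn_g : SurjOn g carrier carrier := by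
  rintro _ ((⟨u, hu, t, ht, rfl⟩ | ⟨u, hu, rfl⟩) | ⟨t, ht, u, hu, rfl⟩)
  · rcases eq_or_eq_mul_of_mem_powersAndZero ht with rfl | ⟨t', ht', rfl⟩
    · exact ⟨1 - u, Or.inl (Or.inr ⟨u, hu, rfl⟩), by rw [g_one_sub hu]; ring⟩
    · exact ⟨u * t', Or.inl (Or.inl ⟨u, hu, t', ht', rfl⟩), by rw [g_mul hu ht']; ring⟩
  · exact ⟨_, Or.inr ⟨_, self_mem_powersAndZero, u, hu, rfl⟩,
      by rw [g_two_sub hu self_mem_powersAndZero]; ring⟩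
  · exact ⟨_, Or.inr ⟨_, mul_mem_powersAndZero ht, u, hu, rfl⟩,
      by rw [g_two_sub hu (mul_mem_powersAndZero ht)]; ring⟩

lemma exists_affine_eventuallyEq_g {x : ℝ} (hx : x ∈ carrier) :
    ∃ m c : ℝ, m ≠ 0 ∧ g =ᶠ[𝓝 x] fun y => m * y + c := by
  rcases hx with (⟨u, hu, t, ht, rfl⟩ | ⟨u, hu, rfl⟩) | ⟨t, ht, u, hu, rfl⟩
  · obtain ⟨hu₀, hu₁⟩ := mem_Icc_half hu
    obtain ⟨ht₀, ht₁⟩ := mem_Icc_third ht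
    refine ⟨1 / 3, 0, by norm_num, ?_⟩
    filter_upwards [Iio_mem_nhds (show u * t < 1 / 3 by nlinarith)] with y hy
    rw [g, if_pos (mem_Iio.1 hy)]
    ring
  · obtain ⟨hu₀, hu₁⟩ := mem_Icc_half hu
    refine ⟨-1 / 3, 1 / 3, by norm_num, ?_⟩
    filter_upwards [Ioo_mem_nhds (show 1 / 3 < 1 - u by linarith)
      (show 1 - u < 5 / 4 by linarith)] with y hy
    rw [g, if_neg (not_lt.2 hy.1.le), if_pos hy.2]
    ring
  · obtain ⟨hu₀, hu₁⟩ := mem_Icc_half hu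
    obtain ⟨ht₀, ht₁⟩ := mem_Icc_third ht
    refine ⟨3, -4, by norm_num, ?_⟩
    filter_upwards [Ioi_mem_nhds (show 5 / 4 < 2 - t * (1 + u) by nlinarith)] with y hy
    rw [g, if_neg (by linarith [mem_Ioi.1 hy]), if_neg (not_lt.2 (mem_Ioi.1 hy).le)]
    ring

noncomputable def φ₀ : carrier → carrier := mapsTo_g.restrict g carrier carrier

lemma continuous_φ₀ : Continuous φ₀ := by
  refine ContinuousOn.mapsToRestrict (fun x hx => ?_) mapsTo_g
  obtain ⟨m, c, -, h⟩ := exists_affine_eventuallyEq_g hx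
  exact ((continuous_const.mul continuous_id).add continuous_const).continuousAt.congr
    h.symm |>.continuousWithinAt

lemma locallyInjective_φ₀ : LocallyInjective φ₀ := by
  refine locallyInjective_restrict mapsTo_g fun x hx => ?_
  obtain ⟨m, c, hm, h⟩ := exists_affine_eventuallyEq_g hx
  refine ⟨_, h, fun y (hy : g y = m * y + c) z (hz : g z = m * z + c) hyz => ?_⟩
  have : m * y + c = m * z + c := by rw [← hy, ← hz, hyz]
  exact mul_left_cancel₀ hm (add_right_cancel this)

lemma eq_of_g_eq_half_pow_mul_third_pow {z : ℝ} (hz : z ∈ carrier) {i n : ℕ}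
    (h : g z = (1 / 2) ^ (i + 1) * (1 / 3) ^ (n + 1)) :
    (n = 0 ∧ z = 1 - (1 / 2) ^ (i + 1)) ∨
      ∃ m, n = m + 1 ∧ z = (1 / 2) ^ (i + 1) * (1 / 3) ^ (m + 1) := by
  have hpos : (0 : ℝ) < (1 / 2) ^ (i + 1) * (1 / 3) ^ (n + 1) := by positivity
  rcases hz with (⟨u, hu, t, ht, rfl⟩ | ⟨u, hu, rfl⟩) | ⟨t, ht, u, hu, rfl⟩
  · rw [g_mul hu ht] at h
    rcases hu with rfl | ⟨p, rfl⟩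
    · rw [zero_mul, zero_div] at h; exact absurd h hpos.ne
    rcases ht with rfl | ⟨q, rfl⟩
    · rw [mul_zero, zero_div] at h; exact absurd h hpos.ne
    have h' : (1 / 2 : ℝ) ^ (p + 1) * (1 / 3) ^ (q + 1 + 1) =
        (1 / 2) ^ (i + 1) * (1 / 3) ^ (n + 1) := by
      rw [← h, pow_succ _ (q + 1)]; ring
    obtain ⟨hp, hq⟩ := half_pow_mul_third_pow_inj h'
    exact Or.inr ⟨q, by omega, by rw [show p = i by omega]⟩
  · rw [g_one_sub hu] at h
    rcases hu with rfl | ⟨p, rfl⟩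
    · rw [zero_div] at h; exact absurd h hpos.ne
    have h' : (1 / 2 : ℝ) ^ (p + 1) * (1 / 3) ^ (0 + 1) =
        (1 / 2) ^ (i + 1) * (1 / 3) ^ (n + 1) := by
      rw [← h]; ring
    obtain ⟨hp, hn⟩ := half_pow_mul_third_pow_inj h'
    exact Or.inl ⟨by omega, by rw [show p = i by omega]⟩
  · obtain ⟨hu₀, hu₁⟩ := mem_Icc_half hu
    obtain ⟨ht₀, ht₁⟩ := mem_Icc_third ht
    have : (1 / 2 : ℝ) ^ (i + 1) * (1 / 3) ^ (n + 1) ≤ 1 / 2 * (1 / 3) := by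
      gcongr <;> exact pow_le_of_le_one (by norm_num) (by norm_num) (by omega)
    rw [g_two_sub hu ht] at h
    nlinarith

lemma half_pow_mem_powersAndZero (i : ℕ) : (1 / 2 : ℝ) ^ (i + 1) ∈ powersAndZero (1 / 2) :=
  Or.inr ⟨i, rfl⟩

def zeroPt : carrier := ⟨0, Or.inl (Or.inl ⟨0, Or.inl rfl, 0, Or.inl rfl, mul_zero 0⟩)⟩

def onePt : carrier := ⟨1, Or.inl (Or.inr ⟨0, Or.inl rfl, sub_zero 1⟩)⟩

lemma φ₀_zeroPt_eq_φ₀_onePt : φ₀ zeroPt = φ₀ onePt :=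
  Subtype.ext (by norm_num [φ₀, g, zeroPt, onePt])

lemma zeroPt_ne_onePt : zeroPt ≠ onePt :=
  fun h => zero_ne_one (congrArg Subtype.val h)

lemma zeroPt_mem_closure : zeroPt ∈ closure (singletonFiberPoints φ₀) := by
  let x (i : ℕ) : carrier :=
    ⟨(1 / 2) ^ (i + 1) * (1 / 3),
      Or.inl (Or.inl ⟨_, half_pow_mem_powersAndZero i, _, self_mem_powersAndZero, rfl⟩)⟩
  refine mem_closure_of_tendsto (f := x) (b := atTop) (tendsto_subtype_rng.2 ?_)
    (Eventually.of_forall ?_)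
  · simpa [x, zeroPt] using
      (tendsto_pow_succ_nhds_zero (r := 1 / 2) (by norm_num) (by norm_num)).mul_const (1 / 3 : ℝ)
  · intro i z hz
    have hgz : g z = (1 / 2) ^ (i + 1) * (1 / 3) ^ (1 + 1) := by
      rw [show g z = g (x i) from congrArg Subtype.val hz,
        g_mul (half_pow_mem_powersAndZero i) self_mem_powersAndZero]
      ring
    rcases eq_of_g_eq_half_pow_mul_third_pow z.2 hgz with ⟨h, -⟩ | ⟨m, hm, hz⟩
    · omega
    · exact Subtype.ext (by rw [hz, show m = 0 by omega, pow_one])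

lemma onePt_mem_closure : onePt ∈ closure (singletonFiberPoints φ₀) := by
  let x (i : ℕ) : carrier :=
    ⟨1 - (1 / 2) ^ (i + 1), Or.inl (Or.inr ⟨_, half_pow_mem_powersAndZero i, rfl⟩)⟩
  refine mem_closure_of_tendsto (f := x) (b := atTop) (tendsto_subtype_rng.2 ?_)
    (Eventually.of_forall ?_)
  · simpa [x, onePt] using tendsto_const_nhds.sub
      (tendsto_pow_succ_nhds_zero (r := (1 / 2 : ℝ)) (by norm_num) (by norm_num))
  · intro i z hz
    have hgz : g z = (1 / 2) ^ (i + 1) * (1 / 3) ^ (0 + 1) := by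
      rw [show g z = g (x i) from congrArg Subtype.val hz, g_one_sub (half_pow_mem_powersAndZero i)]
      ring
    rcases eq_of_g_eq_half_pow_mul_third_pow z.2 hgz with ⟨-, hz⟩ | ⟨m, hm, -⟩
    · exact Subtype.ext hz
    · omega

end CSLIExample

/-- There is a compact metric space and a CSLI map on it admitting no cocycle;
in particular the map is not a local homeomorphism. -/
theorem exists_CSLI_not_admissible :
    ∃ (X : Type) (_ : MetricSpace X), CompactSpace X ∧
      ∃ φ : X → X, CSLI φ ∧ (¬ ∃ ω : X → ℝ, IsCocycle φ ω) ∧ ¬ IsLocalHomeomorph φ := by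
  open CSLIExample in
  refine ⟨carrier, inferInstance, isCompact_iff_compactSpace.1 isCompact_carrier, φ₀,
    ⟨continuous_φ₀, mapsTo_g.restrict_surjective_iff.2 surjOn_g, locallyInjective_φ₀⟩, ?_, ?_⟩
  · rintro ⟨ω, hω⟩
    exact zeroPt_ne_onePt <| hω.injOn_closure_singletonFiberPoints zeroPt_mem_closure
      onePt_mem_closure φ₀_zeroPt_eq_φ₀_onePt
  · intro h
    have hone := (h.isOpenMap.isClosed_singletonFiberPoints continuous_φ₀).closure_subset
      onePt_mem_closure
    exact zeroPt_ne_onePt (hone zeroPt φ₀_zeroPt_eq_φ₀_onePt)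
end

section
/- There exists a compact metric space X and a CSLI map φ : X → X such that φ admits a cocycle but φ is not a local homeomorphism. -/
/-! On `ℕ∞ = ℕ ∪ {⊤}`, a compact metrizable space, let `φ = predTop` shift `n + 1 ↦ n`, fix `⊤` and send
the isolated point `0` to `⊤`. It is injective on the clopen set `{0}ᶜ`, hence locally injective,
and every fibre `φ⁻¹{y}` is `{y + 1}` together with `0` when `y = ⊤`; so the indicator of `{0}ᶜ`
is a cocycle. But `φ` maps the open set `{0}` onto the non-open `{⊤}`, so it is not open. -/

open Set

theorem not_isLocalHomeomorph_of_isOpen_singleton {X Y : Type*} [TopologicalSpace X]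
    [TopologicalSpace Y] {f : X → Y} {x : X} (hx : IsOpen {x}) (hfx : ¬IsOpen {f x}) :
    ¬IsLocalHomeomorph f := fun hf => hfx (by simpa using hf.isOpenMap _ hx)

theorem ENat.not_isOpen_singleton_top : ¬IsOpen ({⊤} : Set ℕ∞) := fun h =>
  have ⟨_, hn⟩ := (tendsto_natCast_nhds_top.eventually_mem (h.mem_nhds rfl)).exists
  ENat.natCast_ne_top _ hn

theorem ENat.isClopen_singleton_zero : IsClopen ({0} : Set ℕ∞) :=
  ⟨isClosed_singleton, ENat.isOpen_singleton ENat.top_ne_zero.symm⟩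

-- `⊤ - 1 = ⊤` in `ℕ∞`, so `predTop` fixes `⊤`.
def predTop (x : ℕ∞) : ℕ∞ := if x = 0 then ⊤ else x - 1

theorem continuous_predTop : Continuous predTop :=
  continuous_const.if (by simp [isClopen_iff_frontier_eq_empty.1 ENat.isClopen_singleton_zero])
    (continuous_id.enatSub continuous_const fun _ => Or.inr ENat.one_ne_top)

theorem predTop_add_one (y : ℕ∞) : predTop (y + 1) = y := by
  simp only [predTop, add_eq_zero, one_ne_zero, and_false, if_false]
  exact (ENat.addLECancellable_natCast 1).add_tsub_cancel_right

theorem predTop_add_one_eq_self {x : ℕ∞} (hx : x ≠ 0) : predTop x + 1 = x := by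
  simpa [predTop, hx] using tsub_add_cancel_of_le (Order.one_le_iff_ne_zero.2 hx)

theorem surjective_predTop : Function.Surjective predTop := fun y => ⟨y + 1, predTop_add_one y⟩

theorem injOn_predTop : InjOn predTop {0}ᶜ := fun x hx y hy h => by
  rw [← predTop_add_one_eq_self hx, h, predTop_add_one_eq_self hy]

theorem locallyInjective_predTop : LocallyInjective predTop := by
  intro x
  by_cases hx : x = 0
  · exact ⟨{0}, hx ▸ ENat.isClopen_singleton_zero.isOpen.mem_nhds rfl, injOn_singleton _ _⟩
  · exact ⟨{0}ᶜ, ENat.isClopen_singleton_zero.compl.isOpen.mem_nhds hx, injOn_predTop⟩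

theorem csli_predTop : CSLI predTop :=
  ⟨continuous_predTop, surjective_predTop, locallyInjective_predTop⟩

theorem preimage_predTop_singleton_inter_compl_zero (y : ℕ∞) :
    predTop ⁻¹' {y} ∩ {0}ᶜ = {y + 1} := by
  ext x
  constructor
  · rintro ⟨rfl, hx⟩
    exact (predTop_add_one_eq_self hx).symm
  · rintro rfl
    exact ⟨predTop_add_one y, by simp⟩

theorem isCocycle_indicator_compl_zero : IsCocycle predTop (({0}ᶜ : Set ℕ∞).indicator 1) := by
  refine ⟨ENat.isClopen_singleton_zero.compl.continuous_indicator continuous_const,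
    fun _ => indicator_nonneg (fun _ _ => zero_le_one) _, fun y => ?_⟩
  rw [← finsum_mem_inter_support, support_indicator, Function.support_one, inter_univ,
    preimage_predTop_singleton_inter_compl_zero, finsum_mem_singleton,
    indicator_of_mem (by simp), Pi.one_apply]

theorem not_isLocalHomeomorph_predTop : ¬IsLocalHomeomorph predTop :=
  not_isLocalHomeomorph_of_isOpen_singleton (x := 0) ENat.isClopen_singleton_zero.isOpen
    (by simpa [predTop] using ENat.not_isOpen_singleton_top)

/-- There is a compact metric space and a CSLI map on it which admits a cocycle
but is not a local homeomorphism. -/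
theorem exists_admissible_CSLI_not_localHomeomorph :
    ∃ (X : Type) (_ : MetricSpace X), CompactSpace X ∧
      ∃ φ : X → X, CSLI φ ∧ (∃ ω : X → ℝ, IsCocycle φ ω) ∧ ¬ IsLocalHomeomorph φ :=
  ⟨ℕ∞, TopologicalSpace.metrizableSpaceMetric ℕ∞, inferInstance, predTop, csli_predTop,
    ⟨_, isCocycle_indicator_compl_zero⟩, not_isLocalHomeomorph_predTop⟩
end

section
/- There exists a compact metric space X and an action d ↦ φ_d of the additive semigroup 𝒫 of positive dyadic rationals on X (so φ_{d+e} = φ_d ∘ φ_e for all d, e ∈ 𝒫) such that every φ_d is a local homeomorphism of X that is surjective but not injective, and the action admits a semigroup cocycle ω : 𝒫 × X → ℝ. In particular, there exists a divisible abelian semigroup of CSLI maps on a compact metric space, none of which is a homeomorphism, which is admissible. -/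
/-- The additive semigroup of positive dyadic rationals. -/
def PosDyadic : Type :=
  {q : ℚ // 0 < q ∧ ∃ (k : ℤ) (n : ℕ), q = (k : ℚ) / 2 ^ n}

instance : Add PosDyadic :=
  ⟨fun a b =>
    ⟨a.1 + b.1, add_pos a.2.1 b.2.1, by
      obtain ⟨k, n, hk⟩ := a.2.2
      obtain ⟨k', n', hk'⟩ := b.2.2
      refine ⟨k * 2 ^ n' + k' * 2 ^ n, n + n', ?_⟩
      rw [hk, hk']
      push_cast
      rw [pow_add]
      field_simp⟩⟩

/-!
Take `X = C × C` with `C = ℕ → Bool` the Cantor space. Read the first coordinate as a clock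
`t = ∑ bᵢ / 2 ^ (i + 1)` and the second as a sequence for the one-sided shift. The time-`2⁻¹ ^ n`
map `step n` advances the clock by `2⁻¹ ^ n` (an odometer on the first `n` digits) and shifts the
sequence whenever the clock wraps around. It is a local homeomorphism which is two-to-one over the
points with clock below `2⁻¹ ^ n` and one-to-one elsewhere. Since
`step n = step (n + 1) ∘ step (n + 1)`, the assignment `k / 2 ^ n ↦ (step n)^[k]` is a well-defined
action of the positive dyadic rationals. Weighting the wrap-around region by `1 / 2` and the rest
by `1` normalizes every fibre of `step n`, and these weights multiply along orbits to a semigroup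
cocycle.
-/

open Function Topology

section FiberNormalized

variable {X Y Z : Type*}

def IsFiberNormalized (f : X → Y) (w : X → ℝ) : Prop :=
  ∀ y, {x | f x = y}.Finite ∧ ∑ᶠ x ∈ {x | f x = y}, w x = 1

theorem IsFiberNormalized.surjective {f : X → Y} {w : X → ℝ} (h : IsFiberNormalized f w) :
    Surjective f := fun y => by
  by_contra hy
  have hempty : {x | f x = y} = ∅ := Set.eq_empty_of_forall_notMem fun x hx => hy ⟨x, hx⟩
  simpa [hempty] using (h y).2

theorem IsFiberNormalized.equiv_comp {f : X → Y} {w : X → ℝ} (h : IsFiberNormalized f w)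
    (e : Y ≃ Z) : IsFiberNormalized (e ∘ f) w := fun z => by
  simpa only [comp_apply, ← e.eq_symm_apply] using h (e.symm z)

theorem IsFiberNormalized.comp {f : Y → Z} {g : X → Y} {v : Y → ℝ} {u : X → ℝ}
    (hf : IsFiberNormalized f v) (hg : IsFiberNormalized g u) :
    IsFiberNormalized (f ∘ g) fun x => u x * v (g x) := fun z => by
  have hfib : {x | (f ∘ g) x = z} = ⋃ y ∈ {y | f y = z}, {x | g x = y} := by
    ext x; simp
  have hdisj : {y | f y = z}.PairwiseDisjoint fun y => {x | g x = y} :=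
    fun y₁ _ y₂ _ hne => Set.disjoint_left.mpr fun x h₁ h₂ => hne (h₁.symm.trans h₂)
  refine ⟨hfib ▸ (hf z).1.biUnion fun y _ => (hg y).1, ?_⟩
  rw [hfib, finsum_mem_biUnion hdisj (hf z).1 fun y _ => (hg y).1]
  calc ∑ᶠ y ∈ {y | f y = z}, ∑ᶠ x ∈ {x | g x = y}, u x * v (g x)
      = ∑ᶠ y ∈ {y | f y = z}, v y := finsum_mem_congr rfl fun y _ => by
        rw [finsum_mem_congr (s := {x | g x = y}) rfl fun x hx => by rw [show g x = y from hx],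
          ← finsum_mem_mul, (hg y).2, one_mul]
    _ = 1 := (hf z).2

end FiberNormalized

section IterWeight

variable {X : Type*}

def iterWeight (f : X → X) (w : X → ℝ) (k : ℕ) (x : X) : ℝ :=
  ∏ i ∈ Finset.range k, w (f^[i] x)

theorem iterWeight_succ (f : X → X) (w : X → ℝ) (k : ℕ) (x : X) :
    iterWeight f w (k + 1) x = w x * iterWeight f w k (f x) := by
  simp only [iterWeight, Finset.prod_range_succ', iterate_succ_apply, iterate_zero_apply]
  ring

theorem iterWeight_add (f : X → X) (w : X → ℝ) (a b : ℕ) (x : X) :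
    iterWeight f w (a + b) x = iterWeight f w a x * iterWeight f w b (f^[a] x) := by
  simp only [iterWeight, Finset.prod_range_add, ← iterate_add_apply, add_comm]

theorem iterWeight_two_mul (f : X → X) (w : X → ℝ) (k : ℕ) :
    iterWeight f w (2 * k) = iterWeight (f ∘ f) (fun x => w x * w (f x)) k := by
  induction k with
  | zero => rfl
  | succ k ih =>
    funext x
    rw [mul_add, iterWeight_add, ih, iterWeight_add (f ∘ f), iterate_mul]
    simp [iterWeight, Finset.prod_range_succ]

theorem iterWeight_nonneg {f : X → X} {w : X → ℝ} (hw : ∀ x, 0 ≤ w x) (k : ℕ) (x : X) :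
    0 ≤ iterWeight f w k x :=
  Finset.prod_nonneg fun _ _ => hw _

theorem continuous_iterWeight [TopologicalSpace X] {f : X → X} {w : X → ℝ} (hf : Continuous f)
    (hw : Continuous w) (k : ℕ) : Continuous (iterWeight f w k) :=
  continuous_finsetProd _ fun i _ => hw.comp (hf.iterate i)

theorem IsFiberNormalized.iterate {f : X → X} {w : X → ℝ} (h : IsFiberNormalized f w) (k : ℕ) :
    IsFiberNormalized f^[k] (iterWeight f w k) := by
  induction k with
  | zero => exact fun y => ⟨by simp, by simp [iterWeight]⟩
  | succ k ih =>
    rw [iterate_succ, funext (iterWeight_succ f w k)]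
    exact ih.comp h

end IterWeight

section LocalHomeomorph

variable {X Y X' Y' : Type*} [TopologicalSpace X] [TopologicalSpace Y] [TopologicalSpace X']
  [TopologicalSpace Y']

theorem IsLocalHomeomorph.prodMap {f : X → X'} {g : Y → Y'} (hf : IsLocalHomeomorph f)
    (hg : IsLocalHomeomorph g) : IsLocalHomeomorph (Prod.map f g) := fun x => by
  obtain ⟨e₁, hx₁, rfl⟩ := hf x.1
  obtain ⟨e₂, hx₂, rfl⟩ := hg x.2
  exact ⟨e₁.prod e₂, ⟨hx₁, hx₂⟩, rfl⟩

theorem IsLocalHomeomorph.of_eventuallyEq {f : X → Y}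
    (h : ∀ x, ∃ g : X → Y, IsLocalHomeomorph g ∧ f =ᶠ[𝓝 x] g) : IsLocalHomeomorph f := by
  refine IsLocalHomeomorph.mk f fun x => ?_
  obtain ⟨g, hg, hfg⟩ := h x
  obtain ⟨U, hfgU, hU, hxU⟩ := eventually_nhds_iff.mp hfg
  obtain ⟨e, hxe, rfl⟩ := hg x
  exact ⟨e.restrOpen U hU, ⟨hxe, hxU⟩, fun y hy => hfgU y hy.2⟩

theorem IsLocalHomeomorph.iterate {f : X → X} (hf : IsLocalHomeomorph f) :
    ∀ k, IsLocalHomeomorph f^[k]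
  | 0 => (Homeomorph.refl X).isLocalHomeomorph
  | k + 1 => by rw [iterate_succ]; exact (hf.iterate k).comp hf

theorem continuous_ite_of_isClopen {f g : X → Y} {p : X → Prop} [DecidablePred p]
    (hp : IsClopen {x | p x}) (hf : Continuous f) (hg : Continuous g) :
    Continuous fun x => if p x then f x else g x :=
  hf.if (by simp [hp.frontier_eq]) hg

end LocalHomeomorph

theorem not_injective_iterate {X : Type*} {f : X → X} (hf : ¬ Injective f) {k : ℕ} (hk : 0 < k) :
    ¬ Injective f^[k] := by
  obtain ⟨j, rfl⟩ := Nat.exists_eq_add_of_lt hk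
  rw [zero_add, iterate_succ]
  exact fun h => hf h.of_comp

theorem bijective_of_iterate_eq_id {X : Type*} {f : X → X} {k : ℕ} (hk : 0 < k)
    (h : f^[k] = id) : Bijective f := by
  obtain ⟨j, rfl⟩ := Nat.exists_eq_add_of_lt hk
  rw [zero_add] at h
  refine bijective_iff_has_inverse.mpr ⟨f^[j], fun x => ?_, fun x => ?_⟩
  · rw [← iterate_succ_apply, h, id]
  · rw [← iterate_succ_apply' f j x, h, id]

theorem eq_of_cast_div_two_pow_eq {α : Type*} {F : ℕ → ℕ → α}
    (hF : ∀ k n, F k n = F (2 * k) (n + 1)) {k n k' n' : ℕ}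
    (h : (k : ℚ) / 2 ^ n = k' / 2 ^ n') : F k n = F k' n' := by
  have scale : ∀ k n j, F k n = F (2 ^ j * k) (n + j) := fun k n j => by
    induction j with
    | zero => simp
    | succ j ih => rw [ih, hF, pow_succ', mul_assoc, add_assoc]
  have hcross : 2 ^ n' * k = 2 ^ n * k' := by
    rw [div_eq_div_iff (by positivity) (by positivity)] at h
    exact_mod_cast (by linarith : (2 : ℚ) ^ n' * k = 2 ^ n * k')
  rw [scale k n n', scale k' n' n, hcross, add_comm]

namespace PosDyadic

theorem exists_val_eq (d : PosDyadic) : ∃ k n : ℕ, d.1 = k / 2 ^ n := by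
  obtain ⟨hpos, k, n, hk⟩ := d.2
  have hk₀ : 0 ≤ k := by
    rw [hk] at hpos
    exact_mod_cast (div_pos_iff_of_pos_right (by positivity)).mp hpos |>.le
  have hcast : ((k.toNat : ℕ) : ℚ) = k := by exact_mod_cast Int.toNat_of_nonneg hk₀
  exact ⟨k.toNat, n, by rw [hk, hcast]⟩

/-- Together with `level`, a representation `d = num / 2 ^ level` picked by choice, not
necessarily in lowest terms. -/
noncomputable def num (d : PosDyadic) : ℕ := d.exists_val_eq.choose

noncomputable def level (d : PosDyadic) : ℕ := d.exists_val_eq.choose_spec.choose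

theorem val_eq (d : PosDyadic) : d.1 = d.num / 2 ^ d.level :=
  d.exists_val_eq.choose_spec.choose_spec

theorem num_pos (d : PosDyadic) : 0 < d.num := by
  have h := d.2.1
  rw [val_eq] at h
  exact_mod_cast (div_pos_iff_of_pos_right (by positivity)).mp h

theorem exists_common_level (d e : PosDyadic) :
    ∃ a b L : ℕ, d.1 = a / 2 ^ L ∧ e.1 = b / 2 ^ L ∧ (d + e).1 = (a + b : ℕ) / 2 ^ L := by
  have hd : d.1 = (d.num * 2 ^ e.level : ℕ) / 2 ^ (d.level + e.level) := by
    rw [val_eq]; push_cast; rw [pow_add]; field_simp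
  have he : e.1 = (e.num * 2 ^ d.level : ℕ) / 2 ^ (d.level + e.level) := by
    rw [val_eq]; push_cast; rw [pow_add]; field_simp
  refine ⟨_, _, _, hd, he, ?_⟩
  change d.1 + e.1 = _
  rw [hd, he, Nat.cast_add, add_div]

end PosDyadic

section DyadicAction

variable {X : Type*} (ψ : ℕ → X → X) (w : ℕ → X → ℝ)

noncomputable def dyadicAction (d : PosDyadic) : X → X := (ψ d.level)^[d.num]

noncomputable def dyadicCocycle (d : PosDyadic) : X → ℝ := iterWeight (ψ d.level) (w d.level) d.num

variable {ψ w}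

theorem dyadicAction_eq (hψ : ∀ n, ψ n = ψ (n + 1) ∘ ψ (n + 1)) {d : PosDyadic} {k n : ℕ}
    (h : d.1 = k / 2 ^ n) : dyadicAction ψ d = (ψ n)^[k] :=
  eq_of_cast_div_two_pow_eq (F := fun k n => (ψ n)^[k])
    (fun k n => by rw [iterate_mul, hψ n]; rfl) (d.val_eq.symm.trans h)

theorem dyadicCocycle_eq (hψ : ∀ n, ψ n = ψ (n + 1) ∘ ψ (n + 1))
    (hw : ∀ n x, w n x = w (n + 1) x * w (n + 1) (ψ (n + 1) x)) {d : PosDyadic} {k n : ℕ}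
    (h : d.1 = k / 2 ^ n) : dyadicCocycle ψ w d = iterWeight (ψ n) (w n) k :=
  eq_of_cast_div_two_pow_eq (F := fun k n => iterWeight (ψ n) (w n) k)
    (fun k n => by rw [iterWeight_two_mul, hψ n, funext (hw n)]) (d.val_eq.symm.trans h)

theorem dyadicAction_add (hψ : ∀ n, ψ n = ψ (n + 1) ∘ ψ (n + 1)) (d e : PosDyadic) :
    dyadicAction ψ (d + e) = dyadicAction ψ d ∘ dyadicAction ψ e := by
  obtain ⟨a, b, L, hd, he, hde⟩ := d.exists_common_level e
  rw [dyadicAction_eq hψ hd, dyadicAction_eq hψ he, dyadicAction_eq hψ hde, iterate_add]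

theorem dyadicCocycle_add (hψ : ∀ n, ψ n = ψ (n + 1) ∘ ψ (n + 1))
    (hw : ∀ n x, w n x = w (n + 1) x * w (n + 1) (ψ (n + 1) x)) (d e : PosDyadic) (x : X) :
    dyadicCocycle ψ w (d + e) x =
      dyadicCocycle ψ w d x * dyadicCocycle ψ w e (dyadicAction ψ d x) := by
  obtain ⟨a, b, L, hd, he, hde⟩ := d.exists_common_level e
  rw [dyadicCocycle_eq hψ hw hd, dyadicCocycle_eq hψ hw he, dyadicCocycle_eq hψ hw hde,
    dyadicAction_eq hψ hd, iterWeight_add]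

end DyadicAction

section ShiftOn

variable {α : Type*}

def seqTail (c : ℕ → α) : ℕ → α := fun i => c (i + 1)

def seqCons (v : α) (c : ℕ → α) : ℕ → α
  | 0 => v
  | i + 1 => c i

@[simp] theorem seqTail_seqCons (v : α) (c : ℕ → α) : seqTail (seqCons v c) = c := rfl

@[simp] theorem seqCons_zero (v : α) (c : ℕ → α) : seqCons v c 0 = v := rfl

theorem seqCons_zero_seqTail (c : ℕ → α) : seqCons (c 0) (seqTail c) = c :=
  funext fun i => by cases i <;> rfl

theorem continuous_seqTail [TopologicalSpace α] : Continuous (seqTail : (ℕ → α) → ℕ → α) :=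
  continuous_pi fun i => continuous_apply (i + 1)

theorem isLocalHomeomorph_seqTail [TopologicalSpace α] [DiscreteTopology α] [CompactSpace α] :
    IsLocalHomeomorph (seqTail : (ℕ → α) → ℕ → α) := by
  refine isLocalHomeomorph_iff_isOpenEmbedding_restrict.mpr fun c => ?_
  let U : Set (ℕ → α) := {c' | c' 0 = c 0}
  have hU : IsClopen U := (isClopen_discrete {c 0}).preimage (continuous_apply 0)
  have : CompactSpace U := isCompact_iff_compactSpace.mp hU.isClosed.isCompact
  have hinj : Injective (U.domRestrict seqTail) := fun x y hxy => Subtype.ext <| by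
    rw [← seqCons_zero_seqTail x.1, ← seqCons_zero_seqTail y.1, x.2, y.2]
    exact congrArg _ hxy
  have hsurj : Surjective (U.domRestrict seqTail) := fun s => ⟨⟨seqCons (c 0) s, rfl⟩, rfl⟩
  have hcont : Continuous (U.domRestrict seqTail) := continuous_seqTail.comp continuous_subtype_val
  exact ⟨U, hU.isOpen.mem_nhds rfl,
    (hcont.isClosedEmbedding hinj).isEmbedding.isOpenEmbedding_of_surjective hsurj⟩

variable {B : Type*}

open Classical in
noncomputable def shiftOn (P : Set B) (x : B × (ℕ → Bool)) : B × (ℕ → Bool) :=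
  (x.1, if x.1 ∈ P then seqTail x.2 else x.2)

open Classical in
noncomputable def shiftWeight (P : Set B) (x : B × (ℕ → Bool)) : ℝ :=
  if x.1 ∈ P then 1 / 2 else 1

theorem isLocalHomeomorph_shiftOn [TopologicalSpace B] {P : Set B} (hP : IsClopen P) :
    IsLocalHomeomorph (shiftOn P) := by
  refine .of_eventuallyEq fun x => ?_
  by_cases hx : x.1 ∈ P
  · refine ⟨Prod.map id seqTail,
      (Homeomorph.refl B).isLocalHomeomorph.prodMap isLocalHomeomorph_seqTail, ?_⟩
    filter_upwards [(hP.isOpen.preimage continuous_fst).mem_nhds hx] with y hy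
    simp only [shiftOn, if_pos (show y.1 ∈ P from hy)]
    rfl
  · refine ⟨id, (Homeomorph.refl _).isLocalHomeomorph, ?_⟩
    filter_upwards [(hP.compl.isOpen.preimage continuous_fst).mem_nhds hx] with y hy
    simp [shiftOn, show y.1 ∉ P from hy]

theorem fiber_shiftOn_of_mem {P : Set B} {y : B × (ℕ → Bool)} (hy : y.1 ∈ P) :
    {x | shiftOn P x = y} = {(y.1, seqCons true y.2), (y.1, seqCons false y.2)} := by
  ext ⟨b, c⟩
  simp only [shiftOn, Set.mem_ofPred_eq, Set.mem_insert_iff, Set.mem_singleton_iff, Prod.ext_iff]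
  constructor
  · rintro ⟨rfl, hc⟩
    rw [if_pos hy] at hc
    rw [← seqCons_zero_seqTail c, hc]
    cases hc0 : c 0 <;> simp_all
  · rintro (⟨rfl, rfl⟩ | ⟨rfl, rfl⟩) <;> simp [hy]

theorem fiber_shiftOn_of_notMem {P : Set B} {y : B × (ℕ → Bool)} (hy : y.1 ∉ P) :
    {x | shiftOn P x = y} = {y} := by
  ext ⟨b, c⟩
  simp only [shiftOn, Set.mem_ofPred_eq, Set.mem_singleton_iff, Prod.ext_iff]
  constructor
  · rintro ⟨rfl, hc⟩
    exact ⟨rfl, by rwa [if_neg hy] at hc⟩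
  · rintro ⟨rfl, rfl⟩
    simp [hy]

theorem isFiberNormalized_shiftOn (P : Set B) : IsFiberNormalized (shiftOn P) (shiftWeight P) := by
  intro y
  by_cases hy : y.1 ∈ P
  · have hne : (y.1, seqCons true y.2) ≠ (y.1, seqCons false y.2) := fun h => by
      simpa using congrArg (fun x => x.2 0) h
    rw [fiber_shiftOn_of_mem hy, finsum_mem_pair hne]
    refine ⟨Set.toFinite _, ?_⟩
    simp only [shiftWeight, if_pos hy]
    norm_num
  · rw [fiber_shiftOn_of_notMem hy]
    exact ⟨Set.finite_singleton y, by simp [shiftWeight, hy]⟩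

theorem not_injective_shiftOn {P : Set B} (hP : P.Nonempty) : ¬ Injective (shiftOn P) := fun h => by
  obtain ⟨b, hb⟩ := hP
  let c : ℕ → Bool := fun _ => true
  have := @h (b, seqCons true c) (b, seqCons false c) (by simp [shiftOn, hb])
  simpa using congrArg (fun x => x.2 0) this

open Classical in
theorem continuous_shiftWeight [TopologicalSpace B] {P : Set B} (hP : IsClopen P) :
    Continuous (shiftWeight P) :=
  continuous_ite_of_isClopen (hP.preimage continuous_fst) continuous_const continuous_const

end ShiftOn

namespace DyadicSuspension

/-- Adds `2⁻¹ ^ n` to the binary fraction `∑ b i / 2 ^ (i + 1)` modulo one, carrying through the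
digits below `n` and discarding the final carry; the digits from `n` on are untouched. -/
def odometer : ℕ → (ℕ → Bool) → ℕ → Bool
  | 0, b => b
  | n + 1, b => update (if b n then odometer n b else b) n (!b n)

/-- The words on which `odometer n` wraps around. -/
def allOnes (n : ℕ) : Set (ℕ → Bool) := {b | ∀ i < n, b i = true}

theorem odometer_apply_of_le {n i : ℕ} (h : n ≤ i) (b : ℕ → Bool) : odometer n b i = b i := by
  induction n with
  | zero => rfl
  | succ n ih =>
    rw [odometer, update_of_ne (by omega)]
    split_ifs
    exacts [ih (by omega), rfl]

theorem odometer_update_of_le {n m : ℕ} (h : n ≤ m) (b : ℕ → Bool) (v : Bool) :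
    odometer n (update b m v) = update (odometer n b) m v := by
  induction n with
  | zero => rfl
  | succ n ih =>
    have hn : update b m v n = b n := update_of_ne (by omega) _ _
    rw [odometer, odometer, hn, ih (by omega), update_comm (by omega)]
    split_ifs <;> rfl

theorem odometer_succ_odometer_succ (n : ℕ) (b : ℕ → Bool) :
    odometer (n + 1) (odometer (n + 1) b) = odometer n b := by
  have hb : odometer n b n = b n := odometer_apply_of_le le_rfl b
  cases hbn : b n <;>
    simp [odometer, hbn, odometer_update_of_le le_rfl, update_eq_self_iff, hb]

theorem mem_allOnes_succ {n : ℕ} {b : ℕ → Bool} :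
    b ∈ allOnes (n + 1) ↔ b ∈ allOnes n ∧ b n = true :=
  Nat.forall_lt_succ_right

theorem odometer_succ_mem_allOnes_succ {n : ℕ} {b : ℕ → Bool} :
    odometer (n + 1) b ∈ allOnes (n + 1) ↔ b ∈ allOnes n ∧ b n = false := by
  have hlow : ∀ (c : ℕ → Bool) v, update c n v ∈ allOnes n ↔ c ∈ allOnes n := fun c v =>
    forall₂_congr fun i hi => by rw [update_of_ne hi.ne]
  rw [mem_allOnes_succ, odometer, hlow, update_self]
  cases b n <;> simp

theorem odometer_iterate_two_pow (n : ℕ) : (odometer n)^[2 ^ n] = id := by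
  induction n with
  | zero => rfl
  | succ n ih =>
    have hsq : (odometer (n + 1))^[2] = odometer n := funext (odometer_succ_odometer_succ n)
    rw [pow_succ', iterate_mul, hsq, ih]

theorem continuous_odometer (n : ℕ) : Continuous (odometer n) := by
  induction n with
  | zero => exact continuous_id
  | succ n ih =>
    have hdigit : IsClopen {b : ℕ → Bool | b n = true} :=
      (isClopen_discrete {true}).preimage (continuous_apply n)
    exact (continuous_ite_of_isClopen hdigit ih continuous_id).update n
      ((continuous_of_discreteTopology (f := not)).comp (continuous_apply n))

noncomputable def odometerHomeomorph (n : ℕ) : (ℕ → Bool) ≃ₜ (ℕ → Bool) :=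
  (continuous_odometer n).homeoOfEquivCompactToT2
    (f := Equiv.ofBijective _ <|
      bijective_of_iterate_eq_id (by positivity) (odometer_iterate_two_pow n))

theorem isClopen_allOnes (n : ℕ) : IsClopen (allOnes n) := by
  have : allOnes n = ⋂ i ∈ Set.Iio n, {b | b i = true} := by
    ext b; simp [allOnes]
  rw [this]
  exact (Set.finite_Iio n).isClopen_biInter fun i _ =>
    (isClopen_discrete {true}).preimage (continuous_apply i)

noncomputable def step (n : ℕ) : (ℕ → Bool) × (ℕ → Bool) → (ℕ → Bool) × (ℕ → Bool) :=
  Prod.map (odometer n) id ∘ shiftOn (allOnes n)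

noncomputable def stepWeight (n : ℕ) : (ℕ → Bool) × (ℕ → Bool) → ℝ := shiftWeight (allOnes n)

theorem step_eq_comp (n : ℕ) : step n = step (n + 1) ∘ step (n + 1) := by
  funext ⟨b, c⟩
  have h₁ : b ∈ allOnes (n + 1) ↔ _ := mem_allOnes_succ
  have h₂ : odometer (n + 1) b ∈ allOnes (n + 1) ↔ _ := odometer_succ_mem_allOnes_succ
  -- the clock wraps around in a full step iff it does in exactly one of the two half-steps
  by_cases hb : b ∈ allOnes n <;> cases hbn : b n <;>
    simp [step, shiftOn, odometer_succ_odometer_succ, h₁, h₂, hb, hbn]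

theorem stepWeight_eq_mul (n : ℕ) (x : (ℕ → Bool) × (ℕ → Bool)) :
    stepWeight n x = stepWeight (n + 1) x * stepWeight (n + 1) (step (n + 1) x) := by
  obtain ⟨b, c⟩ := x
  have h₁ : b ∈ allOnes (n + 1) ↔ _ := mem_allOnes_succ
  have h₂ : odometer (n + 1) b ∈ allOnes (n + 1) ↔ _ := odometer_succ_mem_allOnes_succ
  by_cases hb : b ∈ allOnes n <;> cases hbn : b n <;>
    simp [stepWeight, shiftWeight, step, shiftOn, h₁, h₂, hb, hbn]

theorem stepWeight_nonneg (n : ℕ) (x : (ℕ → Bool) × (ℕ → Bool)) : 0 ≤ stepWeight n x := by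
  unfold stepWeight shiftWeight
  split_ifs <;> norm_num

theorem isLocalHomeomorph_step (n : ℕ) : IsLocalHomeomorph (step n) :=
  ((odometerHomeomorph n).prodCongr (Homeomorph.refl _)).isLocalHomeomorph.comp
    (isLocalHomeomorph_shiftOn (isClopen_allOnes n))

theorem isFiberNormalized_step (n : ℕ) : IsFiberNormalized (step n) (stepWeight n) :=
  (isFiberNormalized_shiftOn _).equiv_comp
    ((odometerHomeomorph n).prodCongr (Homeomorph.refl _)).toEquiv

theorem not_injective_step (n : ℕ) : ¬ Injective (step n) := fun h =>
  not_injective_shiftOn (P := allOnes n) ⟨fun _ => true, fun _ _ => rfl⟩ h.of_comp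

theorem continuous_stepWeight (n : ℕ) : Continuous (stepWeight n) :=
  continuous_shiftWeight (isClopen_allOnes n)

theorem continuous_step (n : ℕ) : Continuous (step n) :=
  (isLocalHomeomorph_step n).continuous

end DyadicSuspension

/-- There is an action of the semigroup of positive dyadic rationals on a compact
metric space by local homeomorphisms which are surjective but not injective (hence
CSLI maps that are not homeomorphisms), and which admits a semigroup cocycle. -/
theorem exists_admissible_divisible_semigroup_action :
    ∃ (X : Type) (_ : MetricSpace X), CompactSpace X ∧
      ∃ Φ : PosDyadic → X → X,
        (∀ d e : PosDyadic, Φ (d + e) = Φ d ∘ Φ e) ∧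
        (∀ d : PosDyadic,
          IsLocalHomeomorph (Φ d) ∧ Function.Surjective (Φ d) ∧ ¬ Function.Injective (Φ d)) ∧
        ∃ ω : PosDyadic → X → ℝ,
          (∀ (d : PosDyadic) (x : X), 0 ≤ ω d x) ∧
          (∀ (d : PosDyadic) (y : X), ∑ᶠ x ∈ {x : X | Φ d x = y}, ω d x = 1) ∧
          (∀ d : PosDyadic, Continuous (ω d)) ∧
          (∀ (d e : PosDyadic) (x : X), ω (d + e) x = ω d x * ω e (Φ d x)) := by
  open DyadicSuspension in
  exact ⟨(ℕ → Bool) × (ℕ → Bool), TopologicalSpace.metrizableSpaceMetric _, inferInstance,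
    dyadicAction step, dyadicAction_add step_eq_comp,
    fun d => ⟨(isLocalHomeomorph_step _).iterate _,
      ((isFiberNormalized_step _).iterate _).surjective,
      not_injective_iterate (not_injective_step _) d.num_pos⟩,
    dyadicCocycle step stepWeight, fun _ => iterWeight_nonneg (stepWeight_nonneg _) _,
    fun _ y => ((isFiberNormalized_step _).iterate _ y).2,
    fun _ => continuous_iterWeight (continuous_step _) (continuous_stepWeight _) _,
    dyadicCocycle_add step_eq_comp stepWeight_eq_mul⟩
end
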